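/- arXiv:2301.11576 — 8 statements merged into one kernel-verified Lean document; each statement's English description precedes it below -/
import Mathlib

section
/- Let (U_l)_{l ∈ Z^d} be square-integrable random variables on a probability space and (z_k) a sequence in Z^d with self-intersection count V_n. If C_0 := ∑_{l ∈ Z^d} sup_{r ∈ Z^d} |E[U_{r+l} U_r]| < ∞, then E[(∑_{k=0}^{n-1} U_{z_k})^2] ≤ C_0 · V_n for all n ≥ 1. -/
/-!
Expanding the square, `E[(∑ₖ U_{z_k})²] = ∑_{j,k} E[U_{z_j} U_{z_k}]`, and each term is at most
`φ(z_j - z_k)` with `φ(l) = sup_r |E[U_{r+l} U_r]|`. Grouping times by the site visited turns the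
double sum into `∑_{a,b} N(a) N(b) φ(a - b)`, and `N(a) N(b) ≤ (N(a)² + N(b)²) / 2` reduces this
to row and column sums of `φ(a - b)`, each bounded by `∑_l φ(l) = C₀` (Schur's test).
-/

open Finset MeasureTheory

/-- Local time of the sequence `z` at site `l` up to time `n`. -/
def localTime (d : ℕ) (z : ℕ → (Fin d → ℤ)) (n : ℕ) (l : Fin d → ℤ) : ℕ :=
  ((Finset.range n).filter fun k => z k = l).card

/-- Self-intersection count `V_n = ∑_l N_n(l)^2`. -/
def selfInt (d : ℕ) (z : ℕ → (Fin d → ℤ)) (n : ℕ) : ℕ :=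
  ∑ l ∈ (Finset.range n).image z, (localTime d z n l) ^ 2

theorem Finset.sum_comp_injective_le_tsum {G : Type*} {φ : G → ℝ} (hφ0 : 0 ≤ φ)
    (hφ : Summable φ) {g : G → G} (hg : Function.Injective g) (S : Finset G) :
    ∑ a ∈ S, φ (g a) ≤ ∑' l, φ l := by
  classical
  rw [← Finset.sum_image hg.injOn]
  exact hφ.sum_le_tsum _ fun l _ => hφ0 l

theorem sum_sum_mul_mul_le_tsum_mul_sum_sq {G : Type*} [AddCommGroup G] (S : Finset G)
    (x : G → ℝ) {φ : G → ℝ} (hφ0 : 0 ≤ φ) (hφ : Summable φ) :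
    ∑ a ∈ S, ∑ b ∈ S, x a * x b * φ (a - b) ≤ (∑' l, φ l) * ∑ a ∈ S, x a ^ 2 := by
  have rows : ∑ a ∈ S, ∑ b ∈ S, x a ^ 2 * φ (a - b) ≤ (∑' l, φ l) * ∑ a ∈ S, x a ^ 2 := by
    rw [Finset.mul_sum]
    refine Finset.sum_le_sum fun a _ => ?_
    rw [← Finset.mul_sum, mul_comm]
    exact mul_le_mul_of_nonneg_right
      (Finset.sum_comp_injective_le_tsum hφ0 hφ sub_right_injective S) (sq_nonneg _)
  have cols : ∑ a ∈ S, ∑ b ∈ S, x b ^ 2 * φ (a - b) ≤ (∑' l, φ l) * ∑ b ∈ S, x b ^ 2 := by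
    rw [Finset.sum_comm, Finset.mul_sum]
    refine Finset.sum_le_sum fun b _ => ?_
    rw [← Finset.mul_sum, mul_comm]
    exact mul_le_mul_of_nonneg_right
      (Finset.sum_comp_injective_le_tsum hφ0 hφ sub_left_injective S) (sq_nonneg _)
  have amgm : 2 * ∑ a ∈ S, ∑ b ∈ S, x a * x b * φ (a - b) ≤
      ∑ a ∈ S, ∑ b ∈ S, x a ^ 2 * φ (a - b) + ∑ a ∈ S, ∑ b ∈ S, x b ^ 2 * φ (a - b) := by
    simp only [Finset.mul_sum, ← Finset.sum_add_distrib]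
    refine Finset.sum_le_sum fun a _ => Finset.sum_le_sum fun b _ => ?_
    nlinarith [mul_le_mul_of_nonneg_right (two_mul_le_add_sq (x a) (x b)) (hφ0 (a - b))]
  linarith

theorem Finset.sum_sum_comp_eq_sum_sum_card_mul {ι G M : Type*} [DecidableEq G] [CommSemiring M]
    (s : Finset ι) (z : ι → G) (f : G → G → M) :
    ∑ j ∈ s, ∑ k ∈ s, f (z j) (z k) =
      ∑ a ∈ s.image z, ∑ b ∈ s.image z,
        (#{j ∈ s | z j = a} : M) * #{k ∈ s | z k = b} * f a b := by
  rw [Finset.sum_comp (fun a => ∑ k ∈ s, f a (z k))]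
  refine Finset.sum_congr rfl fun a _ => ?_
  rw [Finset.sum_comp (f a), nsmul_eq_mul, Finset.mul_sum]
  refine Finset.sum_congr rfl fun b _ => ?_
  rw [nsmul_eq_mul]
  ring

theorem integral_sq_finsetSum {α ι : Type*} [MeasurableSpace α] {μ : Measure α}
    (s : Finset ι) {f : ι → α → ℝ} (hf : ∀ i ∈ s, MemLp (f i) 2 μ) :
    ∫ ω, (∑ i ∈ s, f i ω) ^ 2 ∂μ = ∑ i ∈ s, ∑ j ∈ s, ∫ ω, f i ω * f j ω ∂μ := by
  have hint : ∀ i ∈ s, ∀ j ∈ s, Integrable (fun ω => f i ω * f j ω) μ :=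
    fun i hi j hj => (hf i hi).integrable_mul (hf j hj)
  simp_rw [sq, Finset.sum_mul_sum]
  rw [integral_finsetSum _ fun i hi => integrable_finsetSum _ fun j hj => hint i hi j hj]
  exact Finset.sum_congr rfl fun i hi => integral_finsetSum _ fun j hj => hint i hi j hj

section CorrelationSup

variable {Ω G : Type*} [MeasurableSpace Ω] [AddCommGroup G] (P : Measure Ω) (U : G → Ω → ℝ)

noncomputable def corrSup (l : G) : ℝ :=
  ⨆ r : G, |∫ ω, U (r + l) ω * U r ω ∂P|

variable {P U}

theorem corrSup_nonneg (l : G) : 0 ≤ corrSup P U l :=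
  Real.iSup_nonneg fun _ => abs_nonneg _

theorem integral_mul_le_corrSup {a b : G}
    (hbdd : BddAbove (Set.range fun r : G => |∫ ω, U (r + (a - b)) ω * U r ω ∂P|)) :
    ∫ ω, U a ω * U b ω ∂P ≤ corrSup P U (a - b) := by
  have h := le_ciSup hbdd b
  rw [add_sub_cancel] at h
  exact (le_abs_self _).trans h

end CorrelationSup

theorem stmt2_general {Ω : Type*} [MeasurableSpace Ω] (P : Measure Ω)
    (d : ℕ) (U : (Fin d → ℤ) → Ω → ℝ)
    (hL2 : ∀ l, MemLp (U l) 2 P)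
    (hbdd : ∀ l : Fin d → ℤ,
      BddAbove (Set.range fun r : Fin d → ℤ => |∫ ω, U (r + l) ω * U r ω ∂P|))
    (hsum : Summable fun l : Fin d → ℤ =>
      ⨆ r : Fin d → ℤ, |∫ ω, U (r + l) ω * U r ω ∂P|)
    (z : ℕ → (Fin d → ℤ)) (n : ℕ) :
    ∫ ω, (∑ k ∈ Finset.range n, U (z k) ω) ^ 2 ∂P ≤
      (∑' l : Fin d → ℤ, ⨆ r : Fin d → ℤ, |∫ ω, U (r + l) ω * U r ω ∂P|) *
        (selfInt d z n : ℝ) := by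
  have hV : (selfInt d z n : ℝ) = ∑ a ∈ (range n).image z, (localTime d z n a : ℝ) ^ 2 := by
    simp [selfInt]
  calc ∫ ω, (∑ k ∈ range n, U (z k) ω) ^ 2 ∂P
      = ∑ j ∈ range n, ∑ k ∈ range n, ∫ ω, U (z j) ω * U (z k) ω ∂P :=
        integral_sq_finsetSum _ fun k _ => hL2 (z k)
    _ ≤ ∑ j ∈ range n, ∑ k ∈ range n, corrSup P U (z j - z k) :=
        Finset.sum_le_sum fun j _ => Finset.sum_le_sum fun k _ => integral_mul_le_corrSup (hbdd _)
    _ = ∑ a ∈ (range n).image z, ∑ b ∈ (range n).image z,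
          (localTime d z n a : ℝ) * localTime d z n b * corrSup P U (a - b) :=
        Finset.sum_sum_comp_eq_sum_sum_card_mul _ z fun a b => corrSup P U (a - b)
    _ ≤ _ := by
        rw [hV]
        exact sum_sum_mul_mul_le_tsum_mul_sum_sq _ _ corrSup_nonneg hsum

/-- If `C₀ = ∑_l sup_r |E[U_{r+l} U_r]| < ∞`, then
`E[(∑_{k<n} U_{z_k})^2] ≤ C₀ · V_n`. -/
theorem stmt2 {Ω : Type*} [MeasurableSpace Ω] (P : Measure Ω) [IsProbabilityMeasure P]
    (d : ℕ) (U : (Fin d → ℤ) → Ω → ℝ)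
    (hmeas : ∀ l, Measurable (U l))
    (hL2 : ∀ l, MemLp (U l) 2 P)
    (hbdd : ∀ l : Fin d → ℤ,
      BddAbove (Set.range fun r : Fin d → ℤ => |∫ ω, U (r + l) ω * U r ω ∂P|))
    (hsum : Summable fun l : Fin d → ℤ =>
      ⨆ r : Fin d → ℤ, |∫ ω, U (r + l) ω * U r ω ∂P|)
    (z : ℕ → (Fin d → ℤ)) (n : ℕ) (hn : 1 ≤ n) :
    ∫ ω, (∑ k ∈ Finset.range n, U (z k) ω) ^ 2 ∂P ≤
      (∑' l : Fin d → ℤ, ⨆ r : Fin d → ℤ, |∫ ω, U (r + l) ω * U r ω ∂P|) *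
        (selfInt d z n : ℝ) :=
  stmt2_general P d U hL2 hbdd hsum z n
end

section
/- Let (U_l)_{l ∈ Z^d} be centered random variables uniformly bounded by K with ∑_l sup_r |E[U_{r+l} U_r]| < ∞, and let (z_k) be a sequence in Z^d whose self-intersection counts satisfy V_n ≤ C_1 n^2/(log n)^β for some β > 1. Then S_n/n → 0 almost surely, where S_n = ∑_{k=0}^{n-1} U_{z_k}. -/
open Finset MeasureTheory Filter

/-!
Bounding each correlation `E[U_a U_b]` by `f (a - b)`, where `f l = sup_r |E[U_{r+l} U_r]|`,
and using `N_a N_b ≤ (N_a² + N_b²) / 2` gives `E[S_n²] ≤ (∑ f) V_n`. By Chebyshev,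
`P(|S_n| ≥ ε n) = O((log n)^{-β})`, which is summable along every geometric sequence `⌊c^k⌋`
because `β > 1`; Borel–Cantelli gives `S_n / n → 0` almost surely along it. Since `S_n + K n` is
nondecreasing, convergence along `⌊c^k⌋` for a sequence of ratios `c ↓ 1` extends to all `n`.
-/

theorem sum_mul_mul_le_tsum_mul_sum_sq {G : Type*} [AddCommGroup G] (I : Finset G) (N : G → ℝ)
    {f : G → ℝ} (hf0 : ∀ l, 0 ≤ f l) (hf : Summable f) :
    ∑ a ∈ I, ∑ b ∈ I, N a * N b * f (a - b) ≤ (∑' l, f l) * ∑ a ∈ I, N a ^ 2 := by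
  classical
  have row (a : G) : ∑ b ∈ I, f (a - b) ≤ ∑' l, f l := by
    rw [← sum_image sub_right_injective.injOn]
    exact hf.sum_le_tsum _ fun l _ => hf0 l
  have col (b : G) : ∑ a ∈ I, f (a - b) ≤ ∑' l, f l := by
    rw [← sum_image sub_left_injective.injOn]
    exact hf.sum_le_tsum _ fun l _ => hf0 l
  calc ∑ a ∈ I, ∑ b ∈ I, N a * N b * f (a - b)
      ≤ ∑ a ∈ I, ∑ b ∈ I, (N a ^ 2 / 2 * f (a - b) + N b ^ 2 / 2 * f (a - b)) := by
        gcongr with a _ b _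
        rw [← add_mul]
        exact mul_le_mul_of_nonneg_right (by nlinarith [sq_nonneg (N a - N b)]) (hf0 _)
    _ = ∑ a ∈ I, N a ^ 2 / 2 * ∑ b ∈ I, f (a - b) + ∑ b ∈ I, N b ^ 2 / 2 * ∑ a ∈ I, f (a - b) := by
        simp only [sum_add_distrib, mul_sum]
        rw [sum_comm (f := fun a b => N b ^ 2 / 2 * f (a - b))]
    _ ≤ ∑ a ∈ I, N a ^ 2 / 2 * ∑' l, f l + ∑ b ∈ I, N b ^ 2 / 2 * ∑' l, f l := by
        gcongr with a _ b _
        · exact row a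
        · exact col b
    _ = (∑' l, f l) * ∑ a ∈ I, N a ^ 2 := by
        rw [← sum_add_distrib, mul_sum]
        exact sum_congr rfl fun a _ => by ring

theorem sum_range_comp_eq_sum_localTime {d : ℕ} (z : ℕ → (Fin d → ℤ)) (n : ℕ)
    (g : (Fin d → ℤ) → ℝ) :
    ∑ k ∈ range n, g (z k) = ∑ a ∈ (range n).image z, (localTime d z n a : ℝ) * g a := by
  rw [sum_comp]
  simp only [nsmul_eq_mul, localTime]

theorem sum_range_sum_range_le_tsum_mul_selfInt {d : ℕ} (z : ℕ → (Fin d → ℤ))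
    {f : (Fin d → ℤ) → ℝ} (hf0 : ∀ l, 0 ≤ f l) (hf : Summable f) (n : ℕ) :
    ∑ j ∈ range n, ∑ k ∈ range n, f (z j - z k) ≤ (∑' l, f l) * selfInt d z n := by
  calc ∑ j ∈ range n, ∑ k ∈ range n, f (z j - z k)
      = ∑ a ∈ (range n).image z, ∑ b ∈ (range n).image z,
          (localTime d z n a : ℝ) * localTime d z n b * f (a - b) := by
        rw [sum_range_comp_eq_sum_localTime z n (fun a => ∑ k ∈ range n, f (a - z k))]
        refine sum_congr rfl fun a _ => ?_
        rw [sum_range_comp_eq_sum_localTime z n (fun b => f (a - b)), mul_sum]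
        simp only [mul_assoc]
    _ ≤ _ := sum_mul_mul_le_tsum_mul_sum_sq _ _ hf0 hf
    _ = _ := by simp [selfInt]

theorem summable_inv_log_nat_floor_pow_rpow {c β : ℝ} (hc : 1 < c) (hβ : 1 < β) :
    Summable fun n : ℕ => (Real.log ⌊c ^ n⌋₊ ^ β)⁻¹ := by
  have hL : 0 < Real.log c := Real.log_pos hc
  have hlog (n : ℕ) : Real.log (1 - c⁻¹) + n * Real.log c ≤ Real.log ⌊c ^ n⌋₊ := by
    have h₀ : 0 < 1 - c⁻¹ := sub_pos.2 (inv_lt_one_of_one_lt₀ hc)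
    rw [← Real.log_pow, ← Real.log_mul h₀.ne' (by positivity)]
    exact Real.log_le_log (by positivity) (mul_pow_le_nat_floor_pow hc n)
  have hlin : ∀ᶠ n : ℕ in atTop, n * (Real.log c / 2) ≤ Real.log ⌊c ^ n⌋₊ := by
    filter_upwards [(tendsto_natCast_atTop_atTop.atTop_mul_const (half_pos hL)).eventually_ge_atTop
      (-Real.log (1 - c⁻¹))] with n hn
    linarith [hlog n]
  refine Summable.of_norm_bounded_eventually_nat
    ((Real.summable_nat_rpow_inv.2 hβ).mul_left ((Real.log c / 2) ^ β)⁻¹) ?_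
  filter_upwards [hlin, eventually_gt_atTop 0] with n hn hn0
  have hpos : 0 < n * (Real.log c / 2) := by positivity
  rw [norm_inv, Real.norm_of_nonneg (Real.rpow_nonneg (hpos.le.trans hn) _), ← mul_inv,
    ← Real.mul_rpow (by positivity) (by positivity), mul_comm]
  exact inv_anti₀ (by positivity) (Real.rpow_le_rpow hpos.le hn (by linarith))

theorem tendsto_sum_range_div_of_tendsto_nat_floor_pow {x : ℕ → ℝ} {K : ℝ} (hx : ∀ j, -K ≤ x j)
    {c : ℕ → ℝ} (hc : ∀ k, 1 < c k) (hlim : Tendsto c atTop (nhds 1))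
    (h : ∀ k, Tendsto (fun n : ℕ => (∑ j ∈ range ⌊c k ^ n⌋₊, x j) / ⌊c k ^ n⌋₊) atTop (nhds 0)) :
    Tendsto (fun n : ℕ => (∑ j ∈ range n, x j) / n) atTop (nhds 0) := by
  set u : ℕ → ℝ := fun n => ∑ j ∈ range n, x j + K * n
  have hmono : Monotone u := monotone_nat_of_le_succ fun n => by
    simp only [u, sum_range_succ, Nat.cast_succ]
    linarith [hx n]
  have hu (n : ℕ) (hn : n ≠ 0) : u n / n = (∑ j ∈ range n, x j) / n + K := by
    simp only [u]
    field_simp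
  have hK := tendsto_div_of_monotone_of_tendsto_div_floor_pow u K hmono c hc hlim fun k => by
    have := (h k).add_const K
    rw [zero_add] at this
    refine this.congr fun n => (hu _ ?_).symm
    exact (Nat.floor_pos.2 (one_le_pow₀ (hc k).le)).ne'
  have := hK.sub_const K
  rw [sub_self] at this
  refine this.congr' ?_
  filter_upwards [eventually_ne_atTop 0] with n hn
  rw [hu n hn, add_sub_cancel_right]

section

variable {Ω : Type*} [MeasurableSpace Ω] (P : Measure Ω)

theorem integral_sq_sum_le_tsum_mul_selfInt {d : ℕ} (U : (Fin d → ℤ) → Ω → ℝ)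
    (hU : ∀ l, MemLp (U l) 2 P) {f : (Fin d → ℤ) → ℝ} (hf0 : ∀ l, 0 ≤ f l) (hf : Summable f)
    (hcov : ∀ a b, |∫ ω, U a ω * U b ω ∂P| ≤ f (a - b)) (z : ℕ → (Fin d → ℤ)) (n : ℕ) :
    ∫ ω, (∑ k ∈ range n, U (z k) ω) ^ 2 ∂P ≤ (∑' l, f l) * selfInt d z n := by
  have hint (a b : Fin d → ℤ) : Integrable (fun ω => U a ω * U b ω) P :=
    (hU a).integrable_mul (hU b)
  calc ∫ ω, (∑ k ∈ range n, U (z k) ω) ^ 2 ∂P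
      = ∑ j ∈ range n, ∑ k ∈ range n, ∫ ω, U (z j) ω * U (z k) ω ∂P := by
        simp_rw [sq, sum_mul_sum]
        rw [integral_finsetSum _ fun j _ => integrable_finsetSum _ fun k _ => hint _ _]
        exact sum_congr rfl fun j _ => integral_finsetSum _ fun k _ => hint _ _
    _ ≤ ∑ j ∈ range n, ∑ k ∈ range n, f (z j - z k) := by
        gcongr with j _ k _
        exact (le_abs_self _).trans (hcov _ _)
    _ ≤ (∑' l, f l) * selfInt d z n := sum_range_sum_range_le_tsum_mul_selfInt z hf0 hf n

theorem measureReal_abs_ge_le_integral_sq_div [IsFiniteMeasure P] {X : Ω → ℝ}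
    (hX : Integrable (fun ω => X ω ^ 2) P) {ε : ℝ} (hε : 0 < ε) :
    P.real {ω | ε ≤ |X ω|} ≤ (∫ ω, X ω ^ 2 ∂P) / ε ^ 2 := by
  have hset : {ω | ε ≤ |X ω|} = {ω | ε ^ 2 ≤ X ω ^ 2} := by
    ext ω
    rw [Set.mem_ofPred_eq, Set.mem_ofPred_eq, ← sq_abs (X ω), sq_le_sq₀ hε.le (abs_nonneg _)]
  rw [le_div_iff₀' (by positivity), hset]
  exact mul_meas_ge_le_integral_of_nonneg (ae_of_all _ fun ω => sq_nonneg (X ω)) hX (ε ^ 2)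

theorem ae_tendsto_zero_of_summable_measureReal [IsFiniteMeasure P] {X : ℕ → Ω → ℝ}
    (h : ∀ ε > 0, Summable fun n => P.real {ω | ε ≤ |X n ω|}) :
    ∀ᵐ ω ∂P, Tendsto (fun n => X n ω) atTop (nhds 0) := by
  have hev (m : ℕ) : ∀ᵐ ω ∂P, ∀ᶠ n in atTop, |X n ω| < 1 / (m + 1) := by
    have hfin : ∑' n, P {ω | 1 / (m + 1) ≤ |X n ω|} ≠ ⊤ := by
      have hsum := ENNReal.ofReal_tsum_of_nonneg (fun _ => measureReal_nonneg)
        (h (1 / (m + 1)) (by positivity))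
      simp only [measureReal_def, ENNReal.ofReal_toReal (measure_ne_top P _)] at hsum
      exact hsum ▸ ENNReal.ofReal_ne_top
    filter_upwards [ae_eventually_notMem hfin] with ω hω
    filter_upwards [hω] with n hn
    simpa using hn
  filter_upwards [ae_all_iff.2 hev] with ω hω
  refine Metric.tendsto_nhds.2 fun ε hε => ?_
  obtain ⟨m, hm⟩ := exists_nat_one_div_lt hε
  filter_upwards [hω m] with n hn
  rw [Real.dist_eq, sub_zero]
  exact hn.trans hm

theorem ae_tendsto_div_nat_floor_pow_of_integral_sq_le [IsFiniteMeasure P] {S : ℕ → Ω → ℝ}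
    (hS : ∀ n, MemLp (S n) 2 P) {C β : ℝ} (hβ : 1 < β)
    (hS2 : ∀ n : ℕ, 2 ≤ n → ∫ ω, S n ω ^ 2 ∂P ≤ C * n ^ 2 / Real.log n ^ β)
    {c : ℝ} (hc : 1 < c) :
    ∀ᵐ ω ∂P, Tendsto (fun n : ℕ => S ⌊c ^ n⌋₊ ω / ⌊c ^ n⌋₊) atTop (nhds 0) := by
  refine ae_tendsto_zero_of_summable_measureReal P fun ε hε => ?_
  refine Summable.of_norm_bounded_eventually_nat
    ((summable_inv_log_nat_floor_pow_rpow hc hβ).mul_left (C / ε ^ 2)) ?_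
  have htop : Tendsto (fun n : ℕ => ⌊c ^ n⌋₊) atTop atTop :=
    tendsto_nat_floor_atTop.comp (tendsto_pow_atTop_atTop_of_one_lt hc)
  filter_upwards [htop.eventually_ge_atTop 2] with n hn
  set N := ⌊c ^ n⌋₊
  have hN : (0 : ℝ) < N := by positivity
  rw [Real.norm_of_nonneg measureReal_nonneg]
  calc P.real {ω | ε ≤ |S N ω / N|}
      ≤ (∫ ω, (S N ω / N) ^ 2 ∂P) / ε ^ 2 :=
        measureReal_abs_ge_le_integral_sq_div P (((hS N).mul_const (N : ℝ)⁻¹).integrable_sq) hε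
    _ = (∫ ω, S N ω ^ 2 ∂P) / N ^ 2 / ε ^ 2 := by simp_rw [div_pow]; rw [integral_div]
    _ ≤ C * N ^ 2 / Real.log N ^ β / N ^ 2 / ε ^ 2 := by gcongr; exact hS2 N hn
    _ = C / ε ^ 2 * (Real.log N ^ β)⁻¹ := by field_simp

end

theorem stmt3_general {Ω : Type*} [MeasurableSpace Ω] (P : Measure Ω) [IsProbabilityMeasure P]
    (d : ℕ) (U : (Fin d → ℤ) → Ω → ℝ) (K : ℝ)
    (hmeas : ∀ l, Measurable (U l))
    (hbound : ∀ l, ∀ᵐ ω ∂P, |U l ω| ≤ K)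
    (hbdd : ∀ l : Fin d → ℤ,
      BddAbove (Set.range fun r : Fin d → ℤ => |∫ ω, U (r + l) ω * U r ω ∂P|))
    (hsum : Summable fun l : Fin d → ℤ =>
      ⨆ r : Fin d → ℤ, |∫ ω, U (r + l) ω * U r ω ∂P|)
    (z : ℕ → (Fin d → ℤ)) (C₁ β : ℝ) (hβ : 1 < β)
    (hV : ∀ n : ℕ, 2 ≤ n → (selfInt d z n : ℝ) ≤ C₁ * n ^ 2 / (Real.log n) ^ β) :
    ∀ᵐ ω ∂P, Tendsto (fun n : ℕ => (∑ k ∈ Finset.range n, U (z k) ω) / n)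
      atTop (nhds 0) := by
  set f : (Fin d → ℤ) → ℝ := fun l => ⨆ r, |∫ ω, U (r + l) ω * U r ω ∂P|
  have hf0 (l : Fin d → ℤ) : 0 ≤ f l := (abs_nonneg _).trans (le_ciSup (hbdd l) 0)
  have hcov (a b : Fin d → ℤ) : |∫ ω, U a ω * U b ω ∂P| ≤ f (a - b) := by
    simpa using le_ciSup (hbdd (a - b)) b
  have hU (l : Fin d → ℤ) : MemLp (U l) 2 P :=
    .of_bound (hmeas l).aestronglyMeasurable K (by simpa using hbound l)
  have hS2 (n : ℕ) (hn : 2 ≤ n) : ∫ ω, (∑ k ∈ range n, U (z k) ω) ^ 2 ∂P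
      ≤ (∑' l, f l) * C₁ * n ^ 2 / Real.log n ^ β := by
    rw [mul_assoc, mul_div_assoc]
    refine (integral_sq_sum_le_tsum_mul_selfInt P U hU hf0 hsum hcov z n).trans ?_
    exact mul_le_mul_of_nonneg_left (hV n hn) (tsum_nonneg hf0)
  set c : ℕ → ℝ := fun k => 1 + 1 / (k + 1)
  have hc (k : ℕ) : 1 < c k := lt_add_of_pos_right 1 (by positivity)
  have hlim : Tendsto c atTop (nhds 1) := by
    simpa [c] using tendsto_one_div_add_atTop_nhds_zero_nat.const_add (1 : ℝ)
  have hfloor (k : ℕ) := ae_tendsto_div_nat_floor_pow_of_integral_sq_le P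
    (fun n => memLp_finsetSum (range n) fun j _ => hU (z j)) hβ hS2 (hc k)
  filter_upwards [ae_all_iff.2 hbound, ae_all_iff.2 hfloor] with ω hωK hω
  exact tendsto_sum_range_div_of_tendsto_nat_floor_pow (fun j => (abs_le.1 (hωK (z j))).1)
    hc hlim hω

/-- Strong law of large numbers along `(z_k)`: if the `U_l` are centered, uniformly bounded,
with summable `sup_r |E[U_{r+l} U_r]|`, and `V_n ≤ C₁ n²/(log n)^β` with `β > 1`,
then `S_n/n → 0` a.s. -/
theorem stmt3 {Ω : Type*} [MeasurableSpace Ω] (P : Measure Ω) [IsProbabilityMeasure P]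
    (d : ℕ) (U : (Fin d → ℤ) → Ω → ℝ) (K : ℝ)
    (hmeas : ∀ l, Measurable (U l))
    (hcent : ∀ l, ∫ ω, U l ω ∂P = 0)
    (hbound : ∀ l, ∀ᵐ ω ∂P, |U l ω| ≤ K)
    (hbdd : ∀ l : Fin d → ℤ,
      BddAbove (Set.range fun r : Fin d → ℤ => |∫ ω, U (r + l) ω * U r ω ∂P|))
    (hsum : Summable fun l : Fin d → ℤ =>
      ⨆ r : Fin d → ℤ, |∫ ω, U (r + l) ω * U r ω ∂P|)
    (z : ℕ → (Fin d → ℤ)) (C₁ β : ℝ) (hβ : 1 < β)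
    (hV : ∀ n : ℕ, 2 ≤ n → (selfInt d z n : ℝ) ≤ C₁ * n ^ 2 / (Real.log n) ^ β) :
    ∀ᵐ ω ∂P, Tendsto (fun n : ℕ => (∑ k ∈ Finset.range n, U (z k) ω) / n)
      atTop (nhds 0) :=
  stmt3_general P d U K hmeas hbound hbdd hsum z C₁ β hβ hV
end

section
/- Let X and Y be positively quadrant dependent (PQD) random variables with finite second moments, and let f, g be absolutely continuous functions on R with |f'| ≤ M and |g'| ≤ M almost everywhere, and E[f(X)^2 + g(Y)^2] < ∞. Then |Cov(f(X), g(Y))| ≤ M^2 · Cov(X, Y). -/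
/-!
Hoeffding's argument. Let `(X₁, Y₁)`, `(X₂, Y₂)` be independent copies of `(X, Y)` (the two
coordinates of `Ω × Ω`). Being `M`-Lipschitz, `f` is absolutely continuous, so
`f X₁ - f X₂ = ∫ f'(s) (1[s < X₁] - 1[s < X₂]) ds`. Multiplying with the analogous formula for `g`,
taking expectations and using Fubini,
  `2 Cov(f X, g Y) = E[(f X₁ - f X₂)(g Y₁ - g Y₂)] = 2 ∫∫ f'(s) g'(t) K(s, t) ds dt`,
where the first identity, applied to the indicators, gives
`K(s, t) = P(X > s, Y > t) - P(X > s) P(Y > t)`. Positive quadrant dependence says `K ≥ 0`, so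
`|f'|, |g'| ≤ M` bound the integral by `M²` times its value for `f = g = id`, which is `Cov(X, Y)`.
-/

open MeasureTheory ProbabilityTheory Set
open scoped NNReal

section OrientedIndicator

noncomputable def orientedIndicator (a b s : ℝ) : ℝ :=
  (Iio b).indicator 1 s - (Iio a).indicator 1 s

lemma orientedIndicator_swap (a b s : ℝ) :
    orientedIndicator b a s = -orientedIndicator a b s := by
  simp only [orientedIndicator, neg_sub]

lemma mul_orientedIndicator_of_le (F : ℝ → ℝ) {a b : ℝ} (hab : a ≤ b) (s : ℝ) :
    F s * orientedIndicator a b s = (Ico a b).indicator F s := by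
  simp only [orientedIndicator, indicator_apply, mem_Iio, mem_Ico, Pi.one_apply]
  split_ifs <;> grind

@[fun_prop]
lemma Measurable.orientedIndicator {α : Type*} [MeasurableSpace α] {a b s : α → ℝ}
    (ha : Measurable a) (hb : Measurable b) (hs : Measurable s) :
    Measurable fun x ↦ orientedIndicator (a x) (b x) (s x) :=
  (measurable_const.indicator (measurableSet_lt hs hb)).sub
    (measurable_const.indicator (measurableSet_lt hs ha))

lemma integral_mul_orientedIndicator (F : ℝ → ℝ) (a b : ℝ) :
    ∫ s, F s * orientedIndicator a b s = ∫ s in a..b, F s := by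
  wlog hab : a ≤ b generalizing a b
  · simp only [orientedIndicator_swap b a, mul_neg, integral_neg,
      this b a (le_of_not_ge hab), intervalIntegral.integral_symm a b, neg_neg]
  simp only [mul_orientedIndicator_of_le F hab]
  rw [integral_indicator measurableSet_Ico, integral_Ico_eq_integral_Ioo,
    ← integral_Ioc_eq_integral_Ioo, intervalIntegral.integral_of_le hab]

lemma integrable_mul_orientedIndicator {F : ℝ → ℝ} {C : ℝ} (hFm : AEStronglyMeasurable F)
    (hF : ∀ s, ‖F s‖ ≤ C) (a b : ℝ) :
    Integrable fun s ↦ F s * orientedIndicator a b s := by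
  wlog hab : a ≤ b generalizing a b
  · simp only [orientedIndicator_swap b a, mul_neg]
    exact (this b a (le_of_not_ge hab)).neg
  simp only [mul_orientedIndicator_of_le F hab]
  exact (Measure.integrableOn_of_bounded measure_Ico_lt_top.ne hFm
    (Filter.Eventually.of_forall hF)).integrable_indicator measurableSet_Ico

lemma integral_norm_mul_orientedIndicator_le {F : ℝ → ℝ} {C : ℝ} (hF : ∀ s, ‖F s‖ ≤ C)
    (a b : ℝ) : ∫ s, ‖F s * orientedIndicator a b s‖ ≤ C * |b - a| := by
  wlog hab : a ≤ b generalizing a b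
  · simpa only [orientedIndicator_swap b a, mul_neg, norm_neg, abs_sub_comm]
      using this b a (le_of_not_ge hab)
  simp only [mul_orientedIndicator_of_le F hab, norm_indicator_eq_indicator_norm,
    ← mul_orientedIndicator_of_le (‖F ·‖) hab, integral_mul_orientedIndicator]
  exact (Real.le_norm_self _).trans <|
    intervalIntegral.norm_integral_le_of_norm_le_const fun s _ ↦ by simpa using hF s

end OrientedIndicator

section Lipschitz

lemma lipschitzWith_of_sub_eq_intervalIntegral {f f' : ℝ → ℝ} {K : ℝ≥0}
    (hf : ∀ a b, f b - f a = ∫ t in a..b, f' t) (hf' : ∀ᵐ t, |f' t| ≤ K) : LipschitzWith K f :=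
  LipschitzWith.of_dist_le_mul fun x y ↦ by
    rw [Real.dist_eq, Real.dist_eq, hf y x]
    exact intervalIntegral.norm_integral_le_of_norm_le_const_ae
      (hf'.mono fun t ht _ ↦ (Real.norm_eq_abs _).trans_le ht)

lemma LipschitzWith.integral_deriv_eq_sub {f : ℝ → ℝ} {K : ℝ≥0} (hf : LipschitzWith K f)
    (a b : ℝ) : ∫ x in a..b, deriv f x = f b - f a :=
  hf.lipschitzOnWith.absolutelyContinuousOnInterval.integral_deriv_eq_sub

lemma LipschitzWith.memLp_comp {α : Type*} [MeasurableSpace α] {μ : Measure α}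
    [IsFiniteMeasure μ] {f : ℝ → ℝ} {K : ℝ≥0} (hf : LipschitzWith K f) {X : α → ℝ}
    {p : ENNReal} (hX : MemLp X p μ) : MemLp (fun ω ↦ f (X ω)) p μ := by
  have hf₀ : LipschitzWith K fun x ↦ f x - f 0 := by simpa using hf.sub (LipschitzWith.const (f 0))
  convert (hf₀.comp_memLp (by simp) hX).add (memLp_const (f 0)) using 1
  ext ω
  simp

end Lipschitz

section Hoeffding

variable {Ω : Type*} {X Y : Ω → ℝ}

noncomputable def hoeffdingIntegrand (X Y : Ω → ℝ) (F G : ℝ → ℝ) (p : Ω × Ω) (z : ℝ × ℝ) : ℝ :=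
  F z.1 * orientedIndicator (X p.2) (X p.1) z.1 * (G z.2 * orientedIndicator (Y p.2) (Y p.1) z.2)

lemma integral_hoeffdingIntegrand_deriv {f g : ℝ → ℝ} {Kf Kg : ℝ≥0} (hf : LipschitzWith Kf f)
    (hg : LipschitzWith Kg g) (p : Ω × Ω) :
    ∫ z, hoeffdingIntegrand X Y (deriv f) (deriv g) p z =
      (f (X p.1) - f (X p.2)) * (g (Y p.1) - g (Y p.2)) := by
  rw [Measure.volume_eq_prod]
  simp only [hoeffdingIntegrand]
  rw [integral_prod_mul (fun s ↦ deriv f s * _) (fun t ↦ deriv g t * _),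
    integral_mul_orientedIndicator, integral_mul_orientedIndicator, hf.integral_deriv_eq_sub,
    hg.integral_deriv_eq_sub]

variable [MeasurableSpace Ω]

lemma measurable_hoeffdingIntegrand (hXm : Measurable X) (hYm : Measurable Y) {F G : ℝ → ℝ}
    (hFm : Measurable F) (hGm : Measurable G) :
    Measurable (Function.uncurry (hoeffdingIntegrand X Y F G)) := by
  unfold hoeffdingIntegrand Function.uncurry
  fun_prop

variable {P : Measure Ω}

noncomputable def hoeffdingKernel (P : Measure Ω) (X Y : Ω → ℝ) (z : ℝ × ℝ) : ℝ :=
  P.real {ω | z.1 < X ω ∧ z.2 < Y ω} - P.real {ω | z.1 < X ω} * P.real {ω | z.2 < Y ω}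

lemma hoeffdingKernel_nonneg [IsFiniteMeasure P]
    (hPQD : ∀ x y : ℝ, P {ω | x < X ω} * P {ω | y < Y ω} ≤ P {ω | x < X ω ∧ y < Y ω})
    (z : ℝ × ℝ) : 0 ≤ hoeffdingKernel P X Y z := by
  rw [hoeffdingKernel, sub_nonneg, measureReal_def, measureReal_def, measureReal_def,
    ← ENNReal.toReal_mul]
  exact ENNReal.toReal_mono (measure_ne_top _ _) (hPQD z.1 z.2)

lemma memLp_indicator_one [IsFiniteMeasure P] {s : Set Ω} (hs : MeasurableSet s) (p : ENNReal) :
    MemLp (s.indicator (1 : Ω → ℝ)) p P :=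
  (memLp_const 1).indicator hs

variable [IsProbabilityMeasure P]

lemma integral_prod_sub_mul_sub_eq_two_mul_covariance {u v : Ω → ℝ} (hu : MemLp u 2 P)
    (hv : MemLp v 2 P) :
    ∫ p, (u p.1 - u p.2) * (v p.1 - v p.2) ∂(P.prod P) = 2 * cov[u, v; P] := by
  have hcentered : ∀ w : Ω → ℝ, MemLp w 2 P → ∫ p, (w p.1 - w p.2) ∂(P.prod P) = 0 := by
    intro w hw
    rw [integral_sub ((hw.comp_fst P).integrable one_le_two)
      ((hw.comp_snd P).integrable one_le_two), integral_fun_fst, integral_fun_snd, sub_self]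
  calc ∫ p, (u p.1 - u p.2) * (v p.1 - v p.2) ∂(P.prod P)
      = cov[fun p ↦ u p.1 - u p.2, fun p ↦ v p.1 - v p.2; P.prod P] := by
        simp only [covariance, hcentered u hu, hcentered v hv, sub_zero]
    _ = cov[fun p ↦ u p.1, fun p ↦ v p.1; P.prod P] - cov[fun p ↦ u p.1, fun p ↦ v p.2; P.prod P]
        - cov[fun p ↦ u p.2, fun p ↦ v p.1; P.prod P]
        + cov[fun p ↦ u p.2, fun p ↦ v p.2; P.prod P] :=
      covariance_fun_sub_fun_sub (hu.comp_fst P) (hu.comp_snd P) (hv.comp_fst P) (hv.comp_snd P)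
    _ = 2 * cov[u, v; P] := by
      rw [measurePreserving_fst.hasLaw.covariance_fun_comp hu.aemeasurable hv.aemeasurable,
        measurePreserving_snd.hasLaw.covariance_fun_comp hu.aemeasurable hv.aemeasurable,
        covariance_fst_snd_prod hu hv, covariance_comm (fun p : Ω × Ω ↦ u p.2),
        covariance_fst_snd_prod hv hu]
      ring

lemma covariance_indicator_eq_hoeffdingKernel (hXm : Measurable X) (hYm : Measurable Y)
    (z : ℝ × ℝ) :
    cov[{ω | z.1 < X ω}.indicator 1, {ω | z.2 < Y ω}.indicator 1; P] =
      hoeffdingKernel P X Y z := by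
  have hXs : MeasurableSet {ω | z.1 < X ω} := measurableSet_lt measurable_const hXm
  have hYs : MeasurableSet {ω | z.2 < Y ω} := measurableSet_lt measurable_const hYm
  rw [covariance_eq_sub (memLp_indicator_one hXs 2) (memLp_indicator_one hYs 2),
    ← inter_indicator_one, integral_indicator_one (hXs.inter hYs), integral_indicator_one hXs,
    integral_indicator_one hYs]
  rfl

lemma integral_prod_hoeffdingIntegrand (hXm : Measurable X) (hYm : Measurable Y) (F G : ℝ → ℝ)
    (z : ℝ × ℝ) :
    ∫ p, hoeffdingIntegrand X Y F G p z ∂(P.prod P) =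
      2 * (F z.1 * G z.2 * hoeffdingKernel P X Y z) := by
  have hdiff : ∫ p, orientedIndicator (X p.2) (X p.1) z.1 * orientedIndicator (Y p.2) (Y p.1) z.2
      ∂(P.prod P) = 2 * hoeffdingKernel P X Y z := by
    rw [← covariance_indicator_eq_hoeffdingKernel hXm hYm,
      ← integral_prod_sub_mul_sub_eq_two_mul_covariance
        (memLp_indicator_one (measurableSet_lt measurable_const hXm) 2)
        (memLp_indicator_one (measurableSet_lt measurable_const hYm) 2)]
    rfl
  simp only [hoeffdingIntegrand, mul_mul_mul_comm (F z.1), integral_const_mul, hdiff]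
  ring

lemma integrable_hoeffdingIntegrand (hXm : Measurable X) (hYm : Measurable Y)
    (hX : MemLp X 2 P) (hY : MemLp Y 2 P) {F G : ℝ → ℝ} {CF CG : ℝ}
    (hFm : Measurable F) (hGm : Measurable G) (hF : ∀ s, ‖F s‖ ≤ CF) (hG : ∀ t, ‖G t‖ ≤ CG) :
    Integrable (Function.uncurry (hoeffdingIntegrand X Y F G)) ((P.prod P).prod volume) := by
  have hΦm := measurable_hoeffdingIntegrand hXm hYm hFm hGm
  rw [integrable_prod_iff hΦm.aestronglyMeasurable]
  constructor
  · refine .of_forall fun p ↦ ?_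
    simp only [Function.uncurry_apply_pair, hoeffdingIntegrand]
    rw [Measure.volume_eq_prod]
    exact (integrable_mul_orientedIndicator hFm.aestronglyMeasurable hF _ _).mul_prod
      (integrable_mul_orientedIndicator hGm.aestronglyMeasurable hG _ _)
  have hdom : Integrable (fun p : Ω × Ω ↦ CF * CG * |(X p.1 - X p.2) * (Y p.1 - Y p.2)|)
      (P.prod P) :=
    (((hX.comp_fst P).sub (hX.comp_snd P)).integrable_mul
      ((hY.comp_fst P).sub (hY.comp_snd P))).abs.const_mul _
  refine hdom.mono' hΦm.aestronglyMeasurable.norm.integral_prod_right' (.of_forall fun p ↦ ?_)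
  have hCF : 0 ≤ CF := (norm_nonneg _).trans (hF 0)
  simp only [Function.uncurry_apply_pair, hoeffdingIntegrand, norm_mul _ (G _ * _)]
  rw [Measure.volume_eq_prod, integral_prod_mul (fun s ↦ ‖F s * _‖) (fun t ↦ ‖G t * _‖),
    Real.norm_of_nonneg (by positivity), abs_mul, mul_mul_mul_comm]
  exact mul_le_mul (integral_norm_mul_orientedIndicator_le hF _ _)
    (integral_norm_mul_orientedIndicator_le hG _ _) (by positivity) (by positivity)

lemma integrable_mul_hoeffdingKernel (hXm : Measurable X) (hYm : Measurable Y)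
    (hX : MemLp X 2 P) (hY : MemLp Y 2 P) {F G : ℝ → ℝ} {CF CG : ℝ}
    (hFm : Measurable F) (hGm : Measurable G) (hF : ∀ s, ‖F s‖ ≤ CF) (hG : ∀ t, ‖G t‖ ≤ CG) :
    Integrable fun z : ℝ × ℝ ↦ F z.1 * G z.2 * hoeffdingKernel P X Y z := by
  have h := (integrable_hoeffdingIntegrand hXm hYm hX hY hFm hGm hF hG).swap.integral_prod_left
  simp only [Function.comp_apply, Prod.swap_prod_mk, Function.uncurry_apply_pair,
    integral_prod_hoeffdingIntegrand hXm hYm] at h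
  simpa using h.div_const 2

theorem covariance_comp_eq_integral_deriv_mul_hoeffdingKernel (hXm : Measurable X)
    (hYm : Measurable Y) (hX : MemLp X 2 P) (hY : MemLp Y 2 P) {f g : ℝ → ℝ} {Kf Kg : ℝ≥0}
    (hf : LipschitzWith Kf f) (hg : LipschitzWith Kg g) :
    cov[fun ω ↦ f (X ω), fun ω ↦ g (Y ω); P] =
      ∫ z : ℝ × ℝ, deriv f z.1 * deriv g z.2 * hoeffdingKernel P X Y z := by
  have hΦ := integrable_hoeffdingIntegrand hXm hYm hX hY (measurable_deriv f) (measurable_deriv g)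
    (fun _ ↦ norm_deriv_le_of_lipschitz hf) (fun _ ↦ norm_deriv_le_of_lipschitz hg)
  have h := integral_integral_swap hΦ
  simp only [integral_hoeffdingIntegrand_deriv hf hg, integral_prod_hoeffdingIntegrand hXm hYm,
    integral_const_mul,
    integral_prod_sub_mul_sub_eq_two_mul_covariance (hf.memLp_comp hX) (hg.memLp_comp hY)] at h
  linarith

theorem abs_covariance_comp_le_mul_covariance
    (hPQD : ∀ x y : ℝ, P {ω | x < X ω} * P {ω | y < Y ω} ≤ P {ω | x < X ω ∧ y < Y ω})
    (hXm : Measurable X) (hYm : Measurable Y) (hX : MemLp X 2 P) (hY : MemLp Y 2 P)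
    {f g : ℝ → ℝ} {Kf Kg : ℝ≥0} (hf : LipschitzWith Kf f) (hg : LipschitzWith Kg g) :
    |cov[fun ω ↦ f (X ω), fun ω ↦ g (Y ω); P]| ≤ Kf * Kg * cov[X, Y; P] := by
  have hint := integrable_mul_hoeffdingKernel (P := P) hXm hYm hX hY (measurable_deriv f)
    (measurable_deriv g) (fun _ ↦ norm_deriv_le_of_lipschitz hf)
    (fun _ ↦ norm_deriv_le_of_lipschitz hg)
  have hK := integrable_mul_hoeffdingKernel (P := P) hXm hYm hX hY measurable_const
    measurable_const (fun _ ↦ le_refl ‖(1 : ℝ)‖) (fun _ ↦ le_refl ‖(1 : ℝ)‖)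
  have hcov : cov[X, Y; P] = ∫ z, hoeffdingKernel P X Y z := by
    simpa using covariance_comp_eq_integral_deriv_mul_hoeffdingKernel hXm hYm hX hY
      LipschitzWith.id LipschitzWith.id
  rw [covariance_comp_eq_integral_deriv_mul_hoeffdingKernel hXm hYm hX hY hf hg, hcov,
    ← integral_const_mul]
  refine abs_integral_le_integral_abs.trans
    (integral_mono hint.abs (by simpa using hK.const_mul _) fun z ↦ ?_)
  have hKz := hoeffdingKernel_nonneg hPQD z
  rw [abs_mul, abs_mul, abs_of_nonneg hKz]
  gcongr
  exacts [norm_deriv_le_of_lipschitz hf, norm_deriv_le_of_lipschitz hg]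

end Hoeffding

theorem stmt5_general {Ω : Type*} [MeasurableSpace Ω] (P : Measure Ω) [IsProbabilityMeasure P]
    (X Y : Ω → ℝ) (hXm : Measurable X) (hYm : Measurable Y)
    (hX : MemLp X 2 P) (hY : MemLp Y 2 P)
    (hPQD : ∀ x y : ℝ,
      P {ω | x < X ω} * P {ω | y < Y ω} ≤ P {ω | x < X ω ∧ y < Y ω})
    (f g f' g' : ℝ → ℝ) (M : ℝ)
    (hfac : ∀ a b : ℝ, f b - f a = ∫ t in a..b, f' t)
    (hgac : ∀ a b : ℝ, g b - g a = ∫ t in a..b, g' t)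
    (hf' : ∀ᵐ t, |f' t| ≤ M) (hg' : ∀ᵐ t, |g' t| ≤ M) :
    |(∫ ω, f (X ω) * g (Y ω) ∂P) - (∫ ω, f (X ω) ∂P) * (∫ ω, g (Y ω) ∂P)| ≤
      M ^ 2 * ((∫ ω, X ω * Y ω ∂P) - (∫ ω, X ω ∂P) * (∫ ω, Y ω ∂P)) := by
  obtain ⟨t, ht⟩ := hf'.exists
  lift M to ℝ≥0 using (abs_nonneg _).trans ht
  have hf := lipschitzWith_of_sub_eq_intervalIntegral hfac hf'
  have hg := lipschitzWith_of_sub_eq_intervalIntegral hgac hg'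
  have h := abs_covariance_comp_le_mul_covariance hPQD hXm hYm hX hY hf hg
  rwa [covariance_eq_sub (hf.memLp_comp hX) (hg.memLp_comp hY), covariance_eq_sub hX hY,
    ← sq] at h

/-- Hoeffding-type covariance inequality for PQD random variables: if `X, Y` are PQD with
finite second moments and `f, g` are absolutely continuous with `|f'|, |g'| ≤ M` a.e. and
`E[f(X)² + g(Y)²] < ∞`, then `|Cov(f(X), g(Y))| ≤ M² Cov(X, Y)`. -/
theorem stmt5 {Ω : Type*} [MeasurableSpace Ω] (P : Measure Ω) [IsProbabilityMeasure P]
    (X Y : Ω → ℝ) (hXm : Measurable X) (hYm : Measurable Y)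
    (hX : MemLp X 2 P) (hY : MemLp Y 2 P)
    (hPQD : ∀ x y : ℝ,
      P {ω | x < X ω} * P {ω | y < Y ω} ≤ P {ω | x < X ω ∧ y < Y ω})
    (f g f' g' : ℝ → ℝ) (M : ℝ)
    (hfac : ∀ a b : ℝ, f b - f a = ∫ t in a..b, f' t)
    (hgac : ∀ a b : ℝ, g b - g a = ∫ t in a..b, g' t)
    (hf' : ∀ᵐ t, |f' t| ≤ M) (hg' : ∀ᵐ t, |g' t| ≤ M)
    (hfX : MemLp (fun ω => f (X ω)) 2 P) (hgY : MemLp (fun ω => g (Y ω)) 2 P) :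
    |(∫ ω, f (X ω) * g (Y ω) ∂P) - (∫ ω, f (X ω) ∂P) * (∫ ω, g (Y ω) ∂P)| ≤
      M ^ 2 * ((∫ ω, X ω * Y ω ∂P) - (∫ ω, X ω ∂P) * (∫ ω, Y ω ∂P)) :=
  stmt5_general P X Y hXm hYm hX hY hPQD f g f' g' M hfac hgac hf' hg'
end

section
/- Let (F_n) and F be right-continuous distribution functions on R. Assume F_n(x) → F(x) for every x in a countable dense set Q ⊆ R, and F_n(x) − F_n(x^−) → F(x) − F(x^−) for every jump point x of F. Then F_n → F uniformly on R. -/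
/-!
Convergence on the dense set `Q` from the right of `x`, together with right-continuity of `G`,
bounds `F n x` from above; approaching `x` through `Q` from the left bounds `leftLim (F n) x`
from below. With the convergence of the jumps (automatic where `G` is continuous) this gives both
`F n x → G x` and `leftLim (F n) x → leftLim G x` at every `x`. Monotonicity then sandwiches
`F n` and `G` on a small interval around each point between these values, so the convergence is
locally uniform; compactness handles bounded intervals and the limits at `±∞` the tails.
-/

open Filter Function Set Topology

theorem dist_lt_two_mul_of_mem_Icc {s t a b c d δ : ℝ} (hs : s ∈ Icc a b) (ht : t ∈ Icc c d)
    (hac : dist a c < δ) (hbd : dist b d < δ) (hab : b - a < δ) : dist s t < 2 * δ := by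
  rw [Real.dist_eq, abs_sub_lt_iff] at *
  obtain ⟨hs₁, hs₂⟩ := hs
  obtain ⟨ht₁, ht₂⟩ := ht
  constructor <;> linarith

theorem ContinuousWithinAt.exists_gt_lt {G : ℝ → ℝ} {x c : ℝ}
    (hG : ContinuousWithinAt G (Ici x) x) (hc : G x < c) : ∃ z, x < z ∧ G z < c := by
  obtain ⟨z, hzc, hxz⟩ := (((hG.mono Ioi_subset_Ici_self).eventually
    (eventually_lt_nhds hc)).and self_mem_nhdsWithin).exists
  exact ⟨z, hxz, hzc⟩

theorem Monotone.exists_lt_lt_of_lt_leftLim {G : ℝ → ℝ} {x c : ℝ} (hG : Monotone G)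
    (hc : c < leftLim G x) : ∃ w, w < x ∧ c < G w := by
  obtain ⟨w, hcw, hwx⟩ := (((hG.tendsto_leftLim x).eventually
    (eventually_gt_nhds hc)).and self_mem_nhdsWithin).exists
  exact ⟨w, hwx, hcw⟩

section Pointwise

variable {ι : Type*} {l : Filter ι} {F : ι → ℝ → ℝ} {G : ℝ → ℝ} {Q : Set ℝ}

theorem eventually_lt_of_tendsto_on_dense (hF : ∀ i, Monotone (F i)) (hG : Monotone G)
    (hQ : Dense Q) (hconv : ∀ q ∈ Q, Tendsto (fun i => F i q) l (𝓝 (G q))) {x c : ℝ}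
    (hGx : ContinuousWithinAt G (Ici x) x) (hc : G x < c) : ∀ᶠ i in l, F i x < c := by
  obtain ⟨z, hxz, hzc⟩ := hGx.exists_gt_lt hc
  obtain ⟨q, hqQ, hxq, hqz⟩ := hQ.exists_between hxz
  filter_upwards [(hconv q hqQ).eventually (eventually_lt_nhds ((hG hqz.le).trans_lt hzc))]
    with i hi
  exact (hF i hxq.le).trans_lt hi

theorem eventually_lt_leftLim_of_tendsto_on_dense (hF : ∀ i, Monotone (F i)) (hG : Monotone G)
    (hQ : Dense Q) (hconv : ∀ q ∈ Q, Tendsto (fun i => F i q) l (𝓝 (G q))) {x c : ℝ}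
    (hc : c < leftLim G x) : ∀ᶠ i in l, c < leftLim (F i) x := by
  obtain ⟨w, hwx, hcw⟩ := hG.exists_lt_lt_of_lt_leftLim hc
  obtain ⟨q, hqQ, hwq, hqx⟩ := hQ.exists_between hwx
  filter_upwards [(hconv q hqQ).eventually (eventually_gt_nhds (hcw.trans_le (hG hwq.le)))]
    with i hi
  exact hi.trans_le ((hF i).le_leftLim hqx)

theorem eventually_lt_sub_leftLim (hF : ∀ i, Monotone (F i)) {x c : ℝ}
    (hjump : leftLim G x ≠ G x →
      Tendsto (fun i => F i x - leftLim (F i) x) l (𝓝 (G x - leftLim G x)))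
    (hc : c < G x - leftLim G x) : ∀ᶠ i in l, c < F i x - leftLim (F i) x := by
  by_cases hx : leftLim G x = G x
  · refine Eventually.of_forall fun i => hc.trans_le ?_
    rw [hx, sub_self, sub_nonneg]
    exact (hF i).leftLim_le le_rfl
  · exact (hjump hx).eventually (eventually_gt_nhds hc)

theorem tendsto_and_tendsto_leftLim_of_tendsto_on_dense (hF : ∀ i, Monotone (F i))
    (hG : Monotone G) (hQ : Dense Q) (hconv : ∀ q ∈ Q, Tendsto (fun i => F i q) l (𝓝 (G q)))
    {x : ℝ} (hGx : ContinuousWithinAt G (Ici x) x)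
    (hjump : leftLim G x ≠ G x →
      Tendsto (fun i => F i x - leftLim (F i) x) l (𝓝 (G x - leftLim G x))) :
    Tendsto (fun i => F i x) l (𝓝 (G x)) ∧
      Tendsto (fun i => leftLim (F i) x) l (𝓝 (leftLim G x)) := by
  simp only [Metric.tendsto_nhds, Real.dist_eq, abs_sub_lt_iff]
  constructor <;> intro ε hε <;>
  filter_upwards
    [eventually_lt_of_tendsto_on_dense hF hG hQ hconv hGx
      (lt_add_of_pos_right (G x) (half_pos hε)),
      eventually_lt_leftLim_of_tendsto_on_dense hF hG hQ hconv
        (sub_lt_self (leftLim G x) (half_pos hε)),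
      eventually_lt_sub_leftLim hF hjump (sub_lt_self _ (half_pos hε))] with i h₁ h₂ h₃ <;>
  constructor <;> linarith

end Pointwise

section Uniform

variable {ι : Type*} {l : Filter ι} {F : ι → ℝ → ℝ} {G : ℝ → ℝ}

theorem tendstoLocallyUniformly_of_tendsto_and_tendsto_leftLim (hF : ∀ i, Monotone (F i))
    (hG : Monotone G) (hGrc : ∀ x, ContinuousWithinAt G (Ici x) x)
    (hpt : ∀ x, Tendsto (fun i => F i x) l (𝓝 (G x)) ∧
      Tendsto (fun i => leftLim (F i) x) l (𝓝 (leftLim G x))) :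
    TendstoLocallyUniformly F G l := by
  rw [Metric.tendstoLocallyUniformly_iff]
  intro ε hε x
  have hδ : 0 < ε / 2 := half_pos hε
  have close : ∀ {u : ι → ℝ} {a : ℝ}, Tendsto u l (𝓝 a) → ∀ᶠ i in l, dist a (u i) < ε / 2 :=
    fun hu => (Metric.tendsto_nhds.1 hu _ hδ).mono fun _ h => by rwa [dist_comm]
  obtain ⟨z, hxz, hz⟩ := (hGrc x).exists_gt_lt (lt_add_of_pos_right (G x) hδ)
  obtain ⟨w, hwx, hw⟩ := hG.exists_lt_lt_of_lt_leftLim (sub_lt_self (leftLim G x) hδ)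
  refine ⟨Ioo w z, Ioo_mem_nhds hwx hxz, ?_⟩
  filter_upwards [close (hpt x).1, close (hpt x).2, close (hpt z).1, close (hpt w).1]
    with i hx hxl hz' hw' y ⟨hwy, hyz⟩
  rw [← mul_div_cancel₀ ε two_ne_zero]
  rcases le_or_gt x y with hxy | hyx
  · exact dist_lt_two_mul_of_mem_Icc ⟨hG hxy, hG hyz.le⟩ ⟨hF i hxy, hF i hyz.le⟩ hx hz'
      (by linarith)
  · exact dist_lt_two_mul_of_mem_Icc ⟨hG hwy.le, hG.le_leftLim hyx⟩
      ⟨hF i hwy.le, (hF i).le_leftLim hyx⟩ hw' hxl (by linarith)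

theorem TendstoLocallyUniformly.tendstoUniformly_of_tendsto_atBot_atTop
    (h : TendstoLocallyUniformly F G l) (hF : ∀ i, Monotone (F i)) (hG : Monotone G)
    {m M : ℝ} (hFm : ∀ i x, m ≤ F i x) (hFM : ∀ i x, F i x ≤ M)
    (hGm : Tendsto G atBot (𝓝 m)) (hGM : Tendsto G atTop (𝓝 M)) :
    TendstoUniformly F G l := by
  rw [Metric.tendstoUniformly_iff]
  intro ε hε
  have hδ : 0 < ε / 2 := half_pos hε
  obtain ⟨a, ha⟩ := (hGm.eventually (eventually_lt_nhds (lt_add_of_pos_right m hδ))).exists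
  obtain ⟨b, hb⟩ := (hGM.eventually (eventually_gt_nhds (sub_lt_self M hδ))).exists
  have hIcc := Metric.tendstoUniformlyOn_iff.1
    (tendstoLocallyUniformly_iff_forall_isCompact.1 h (Icc a (max a b)) isCompact_Icc) _ hδ
  filter_upwards [hIcc] with i hi y
  have hδm : dist m m < ε / 2 := by rwa [dist_self]
  have hδM : dist M M < ε / 2 := by rwa [dist_self]
  rw [← mul_div_cancel₀ ε two_ne_zero]
  rcases lt_or_ge y a with hya | hay
  · exact dist_lt_two_mul_of_mem_Icc ⟨hG.le_of_tendsto hGm y, hG hya.le⟩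
      ⟨hFm i y, hF i hya.le⟩ hδm (hi a ⟨le_rfl, le_max_left a b⟩) (by linarith)
  rcases le_or_gt y (max a b) with hyb | hby
  · linarith [hi y ⟨hay, hyb⟩]
  · have hGb : M - G (max a b) < ε / 2 := by linarith [hG (le_max_right a b)]
    exact dist_lt_two_mul_of_mem_Icc ⟨hG hby.le, hG.ge_of_tendsto hGM y⟩
      ⟨hF i hby.le, hFM i y⟩ (hi _ ⟨le_max_left a b, le_rfl⟩) hδM hGb

end Uniform

theorem stmt7_general (F : ℕ → ℝ → ℝ) (G : ℝ → ℝ)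
    (hFmono : ∀ n, Monotone (F n)) (hGmono : Monotone G)
    (hGrc : ∀ x, ContinuousWithinAt G (Set.Ici x) x)
    (hF0 : ∀ n, Tendsto (F n) atBot (nhds 0)) (hF1 : ∀ n, Tendsto (F n) atTop (nhds 1))
    (hG0 : Tendsto G atBot (nhds 0)) (hG1 : Tendsto G atTop (nhds 1))
    (Q : Set ℝ) (hQd : Dense Q)
    (hconv : ∀ x ∈ Q, Tendsto (fun n => F n x) atTop (nhds (G x)))
    (hjump : ∀ x : ℝ, leftLim G x ≠ G x →
      Tendsto (fun n => F n x - leftLim (F n) x) atTop (nhds (G x - leftLim G x))) :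
    TendstoUniformly F G atTop := by
  have hpt := fun x => tendsto_and_tendsto_leftLim_of_tendsto_on_dense hFmono hGmono hQd hconv
    (hGrc x) (hjump x)
  exact (tendstoLocallyUniformly_of_tendsto_and_tendsto_leftLim hFmono hGmono hGrc hpt)
    |>.tendstoUniformly_of_tendsto_atBot_atTop hFmono hGmono
      (fun n => (hFmono n).le_of_tendsto (hF0 n)) (fun n => (hFmono n).ge_of_tendsto (hF1 n))
      hG0 hG1

/-- Chung's lemma: if right-continuous distribution functions `F n` converge to `F` on a
dense countable set and the jumps converge at every jump point of `F`, then `F n → F`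
uniformly on `ℝ`. -/
theorem stmt7 (F : ℕ → ℝ → ℝ) (G : ℝ → ℝ)
    (hFmono : ∀ n, Monotone (F n)) (hGmono : Monotone G)
    (hFrc : ∀ n x, ContinuousWithinAt (F n) (Set.Ici x) x)
    (hGrc : ∀ x, ContinuousWithinAt G (Set.Ici x) x)
    (hF0 : ∀ n, Tendsto (F n) atBot (nhds 0)) (hF1 : ∀ n, Tendsto (F n) atTop (nhds 1))
    (hG0 : Tendsto G atBot (nhds 0)) (hG1 : Tendsto G atTop (nhds 1))
    (Q : Set ℝ) (hQc : Q.Countable) (hQd : Dense Q)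
    (hconv : ∀ x ∈ Q, Tendsto (fun n => F n x) atTop (nhds (G x)))
    (hjump : ∀ x : ℝ, leftLim G x ≠ G x →
      Tendsto (fun n => F n x - leftLim (F n) x) atTop (nhds (G x - leftLim G x))) :
    TendstoUniformly F G atTop :=
  stmt7_general F G hFmono hGmono hGrc hF0 hF1 hG0 hG1 Q hQd hconv hjump
end

section
/- Let (X_l)_{l ∈ Z^d} be i.i.d. random variables with distribution function F, and for s ≤ t ≤ r set Y_n(u) = V_n^{-1/2} ∑_l N_n(l)(1_{X_l ≤ u} − F(u)). Then there is an absolute constant C such that for all n, E[(Y_n(t) − Y_n(s))^2 (Y_n(r) − Y_n(t))^2] ≤ C (F(r) − F(s))^2. -/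
open Finset MeasureTheory ProbabilityTheory Filter

/-!
With `a_l = N_n(l)`, the increments are `Y_n(t) - Y_n(s) = V_n^{-1/2} ∑_l a_l ξ_l` and
`Y_n(r) - Y_n(t) = V_n^{-1/2} ∑_l a_l η_l`, where `(ξ_l, η_l)` are i.i.d. copies of the centred
indicators of `X ∈ (s, t]` and `X ∈ (t, r]`. Adding one independent summand at a time and expanding
binomially (all odd mixed moments vanish), `A = ∑ a_l ξ_l` and `B = ∑ a_l η_l` satisfy
`E[AB] = E[ξη] ∑ a_l²` and
`E[A²B²] = E[ξ²η²] ∑ a_l⁴ + (E[ξ²] E[η²] + 2 E[ξη]²) ((∑ a_l²)² - ∑ a_l⁴)`,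
so `E[A²B²] ≤ (E[ξ²η²] + E[ξ²] E[η²] + 2 E[ξη]²) V_n²` since `∑ a_l⁴ ≤ (∑ a_l²)²`.
Because the two intervals are disjoint, this combination of moments is exactly `p q` with
`p = F(t) - F(s)` and `q = F(r) - F(t)`, and `p q ≤ (p + q)² / 4` gives the bound with `C = 1/4`.
-/

section IndependentSummands

variable {Ω : Type*} [MeasurableSpace Ω] {P : Measure Ω} [IsProbabilityMeasure P]
  {ξ η U V : Ω → ℝ} {C : ℝ}

lemma integrable_pow_mul_pow_mul_pow_mul_pow (hξ : Measurable ξ) (hη : Measurable η)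
    (hU : Measurable U) (hV : Measurable V) (hξC : ∀ ω, |ξ ω| ≤ C) (hηC : ∀ ω, |η ω| ≤ C)
    (hUC : ∀ ω, |U ω| ≤ C) (hVC : ∀ ω, |V ω| ≤ C) (a b c d : ℕ) :
    Integrable (fun ω => ξ ω ^ a * η ω ^ b * (U ω ^ c * V ω ^ d)) P := by
  refine .of_bound (by fun_prop) (C ^ a * C ^ b * (C ^ c * C ^ d)) (.of_forall fun ω => ?_)
  simp only [Real.norm_eq_abs, abs_mul, abs_pow]
  have hC : 0 ≤ C := (abs_nonneg _).trans (hξC ω)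
  gcongr
  exacts [hξC ω, hηC ω, hUC ω, hVC ω]

omit [IsProbabilityMeasure P] in
lemma ProbabilityTheory.IndepFun.integral_pow_mul_pow_mul_pow_mul_pow
    (hind : IndepFun (fun ω => (ξ ω, η ω)) (fun ω => (U ω, V ω)) P)
    (hξ : Measurable ξ) (hη : Measurable η) (hU : Measurable U) (hV : Measurable V)
    (a b c d : ℕ) :
    ∫ ω, ξ ω ^ a * η ω ^ b * (U ω ^ c * V ω ^ d) ∂P =
      (∫ ω, ξ ω ^ a * η ω ^ b ∂P) * ∫ ω, U ω ^ c * V ω ^ d ∂P :=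
  (hind.comp (φ := fun x : ℝ × ℝ => x.1 ^ a * x.2 ^ b) (ψ := fun x : ℝ × ℝ => x.1 ^ c * x.2 ^ d)
    (by fun_prop) (by fun_prop)).integral_fun_mul_eq_mul_integral
    (by fun_prop) (by fun_prop)

theorem integral_add_pow_mul_add_pow_of_indepFun
    (hind : IndepFun (fun ω => (ξ ω, η ω)) (fun ω => (U ω, V ω)) P)
    (hξ : Measurable ξ) (hη : Measurable η) (hU : Measurable U) (hV : Measurable V)
    (hξC : ∀ ω, |ξ ω| ≤ C) (hηC : ∀ ω, |η ω| ≤ C)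
    (hUC : ∀ ω, |U ω| ≤ C) (hVC : ∀ ω, |V ω| ≤ C) (j k : ℕ) :
    ∫ ω, (ξ ω + U ω) ^ j * (η ω + V ω) ^ k ∂P =
      ∑ m ∈ range (j + 1), ∑ n ∈ range (k + 1), (j.choose m * k.choose n : ℝ) *
        ((∫ ω, ξ ω ^ m * η ω ^ n ∂P) * ∫ ω, U ω ^ (j - m) * V ω ^ (k - n) ∂P) := by
  have hint := integrable_pow_mul_pow_mul_pow_mul_pow (P := P) hξ hη hU hV hξC hηC hUC hVC
  have hexpand : ∀ ω, (ξ ω + U ω) ^ j * (η ω + V ω) ^ k =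
      ∑ m ∈ range (j + 1), ∑ n ∈ range (k + 1), (j.choose m * k.choose n : ℝ) *
        (ξ ω ^ m * η ω ^ n * (U ω ^ (j - m) * V ω ^ (k - n))) := fun ω => by
    rw [add_pow, add_pow, sum_mul_sum]
    exact sum_congr rfl fun m _ => sum_congr rfl fun n _ => by ring
  simp_rw [hexpand]
  rw [integral_finsetSum _ fun m _ => integrable_finsetSum _ fun n _ => (hint _ _ _ _).const_mul _]
  refine sum_congr rfl fun m _ => ?_
  rw [integral_finsetSum _ fun n _ => (hint _ _ _ _).const_mul _]
  simp_rw [integral_const_mul, hind.integral_pow_mul_pow_mul_pow_mul_pow hξ hη hU hV]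

end IndependentSummands

section WeightedSum

variable {Ω ι β : Type*} {X : ι → Ω → β} {a : ι → ℝ} {f g : β → ℝ} {C : ℝ}

def weightedSum (a : ι → ℝ) (f : β → ℝ) (X : ι → Ω → β) (S : Finset ι) (ω : Ω) : ℝ :=
  ∑ l ∈ S, a l * f (X l ω)

@[simp]
lemma weightedSum_empty (ω : Ω) : weightedSum a f X ∅ ω = 0 := sum_empty

lemma weightedSum_insert [DecidableEq ι] {i : ι} {S : Finset ι} (hi : i ∉ S) (ω : Ω) :
    weightedSum a f X (insert i S) ω = weightedSum a f X {i} ω + weightedSum a f X S ω := by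
  simp only [weightedSum, sum_insert hi, sum_singleton]

lemma abs_weightedSum_le (hfC : ∀ x, |f x| ≤ C) {S T : Finset ι} (hST : S ⊆ T) (ω : Ω) :
    |weightedSum a f X S ω| ≤ C * ∑ l ∈ T, |a l| := by
  rw [mul_sum]
  calc |weightedSum a f X S ω| ≤ ∑ l ∈ S, |a l * f (X l ω)| := abs_sum_le_sum_abs _ _
    _ ≤ ∑ l ∈ S, C * |a l| := sum_le_sum fun l _ => by
        rw [abs_mul, mul_comm]; exact mul_le_mul_of_nonneg_right (hfC _) (abs_nonneg _)
    _ ≤ ∑ l ∈ T, C * |a l| := sum_le_sum_of_subset_of_nonneg hST fun l _ _ =>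
        mul_nonneg ((abs_nonneg _).trans (hfC (X l ω))) (abs_nonneg _)

variable [MeasurableSpace Ω] [MeasurableSpace β] {P : Measure Ω} {μ : Measure β}

lemma measurable_weightedSum (hX : ∀ l, Measurable (X l)) (hf : Measurable f) (S : Finset ι) :
    Measurable (weightedSum a f X S) :=
  Finset.measurable_sum S fun l _ => measurable_const.mul (hf.comp (hX l))

lemma ProbabilityTheory.iIndepFun.indepFun_weightedSum (hindep : iIndepFun X P)
    (hX : ∀ l, Measurable (X l)) (hf : Measurable f) (hg : Measurable g) {S T : Finset ι}
    (hST : Disjoint S T) :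
    IndepFun (fun ω => (weightedSum a f X S ω, weightedSum a g X S ω))
      (fun ω => (weightedSum a f X T ω, weightedSum a g X T ω)) P := by
  let pairSum (S : Finset ι) (v : S → β) : ℝ × ℝ :=
    (∑ l : S, a l * f (v l), ∑ l : S, a l * g (v l))
  have hmeas : ∀ S : Finset ι, Measurable (pairSum S) := fun S =>
    .prodMk
      (Finset.measurable_sum _ fun l _ => measurable_const.mul (hf.comp (measurable_pi_apply l)))
      (Finset.measurable_sum _ fun l _ => measurable_const.mul (hg.comp (measurable_pi_apply l)))
  have := (hindep.indepFun_finset S T hST hX).comp (hmeas S) (hmeas T)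
  convert this using 1 <;> ext ω <;>
    exact (sum_coe_sort _ _).symm

variable (hX : ∀ l, Measurable (X l)) (hlaw : ∀ l, P.map (X l) = μ)
include hX hlaw

lemma integral_comp_eq_of_map_eq {h : β → ℝ} (hh : Measurable h) (l : ι) :
    ∫ ω, h (X l ω) ∂P = ∫ x, h x ∂μ := by
  rw [← hlaw l, integral_map (hX l).aemeasurable hh.aestronglyMeasurable]

lemma integral_weightedSum_singleton_pow_mul_pow (hf : Measurable f) (hg : Measurable g)
    (i : ι) (j k : ℕ) :
    ∫ ω, weightedSum a f X {i} ω ^ j * weightedSum a g X {i} ω ^ k ∂P =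
      a i ^ (j + k) * ∫ x, f x ^ j * g x ^ k ∂μ := by
  simp only [weightedSum, sum_singleton, mul_pow]
  rw [← integral_comp_eq_of_map_eq hX hlaw (by fun_prop), ← integral_const_mul]
  congr 1 with ω
  ring

variable [IsProbabilityMeasure P]

lemma integral_weightedSum (hf : Measurable f) (hfC : ∀ x, |f x| ≤ C) (S : Finset ι) :
    ∫ ω, weightedSum a f X S ω ∂P = (∑ l ∈ S, a l) * ∫ x, f x ∂μ := by
  unfold weightedSum
  rw [integral_finsetSum, sum_mul]
  · simp_rw [integral_const_mul, integral_comp_eq_of_map_eq hX hlaw hf]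
  · exact fun l _ => ((integrable_const C).mono' (hf.comp (hX l)).aestronglyMeasurable
      (.of_forall fun ω => hfC _)).const_mul _

variable [DecidableEq ι] (hindep : iIndepFun X P) (hf : Measurable f) (hg : Measurable g)
  (hfC : ∀ x, |f x| ≤ C) (hgC : ∀ x, |g x| ≤ C)
include hindep hf hg hfC hgC

lemma integral_weightedSum_insert_pow_mul_pow {i : ι} {S : Finset ι} (hi : i ∉ S) (j k : ℕ) :
    ∫ ω, weightedSum a f X (insert i S) ω ^ j * weightedSum a g X (insert i S) ω ^ k ∂P =
      ∑ m ∈ range (j + 1), ∑ n ∈ range (k + 1), (j.choose m * k.choose n : ℝ) *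
        ((a i ^ (m + n) * ∫ x, f x ^ m * g x ^ n ∂μ) *
          ∫ ω, weightedSum a f X S ω ^ (j - m) * weightedSum a g X S ω ^ (k - n) ∂P) := by
  have hiS : {i} ⊆ insert i S := singleton_subset_iff.2 (mem_insert_self i S)
  simp_rw [weightedSum_insert hi]
  rw [integral_add_pow_mul_add_pow_of_indepFun
    (hindep.indepFun_weightedSum hX hf hg (disjoint_singleton_left.2 hi))
    (measurable_weightedSum hX hf _) (measurable_weightedSum hX hg _)
    (measurable_weightedSum hX hf _) (measurable_weightedSum hX hg _)
    (abs_weightedSum_le hfC hiS) (abs_weightedSum_le hgC hiS)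
    (abs_weightedSum_le hfC (subset_insert i S)) (abs_weightedSum_le hgC (subset_insert i S))]
  simp_rw [integral_weightedSum_singleton_pow_mul_pow hX hlaw hf hg]

variable (hf₀ : ∫ x, f x ∂μ = 0) (hg₀ : ∫ x, g x ∂μ = 0)
include hf₀ hg₀

theorem integral_weightedSum_mul_weightedSum (S : Finset ι) :
    ∫ ω, weightedSum a f X S ω * weightedSum a g X S ω ∂P =
      (∫ x, f x * g x ∂μ) * ∑ l ∈ S, a l ^ 2 := by
  induction S using Finset.induction_on with
  | empty => simp
  | insert i S hi ih =>
    have h := integral_weightedSum_insert_pow_mul_pow (a := a) hX hlaw hindep hf hg hfC hgC hi 1 1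
    simp only [pow_one] at h
    have : IsProbabilityMeasure μ := hlaw i ▸ Measure.isProbabilityMeasure_map (hX i).aemeasurable
    rw [h, sum_insert hi]
    simp [sum_range_succ, ih, integral_weightedSum hX hlaw hf hfC,
      integral_weightedSum hX hlaw hg hgC, hf₀, hg₀]
    ring

theorem integral_weightedSum_sq_mul_sq (S : Finset ι) :
    ∫ ω, weightedSum a f X S ω ^ 2 * weightedSum a g X S ω ^ 2 ∂P =
      (∫ x, f x ^ 2 * g x ^ 2 ∂μ) * ∑ l ∈ S, a l ^ 4 +
        ((∫ x, f x ^ 2 ∂μ) * (∫ x, g x ^ 2 ∂μ) + 2 * (∫ x, f x * g x ∂μ) ^ 2) *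
          ((∑ l ∈ S, a l ^ 2) ^ 2 - ∑ l ∈ S, a l ^ 4) := by
  induction S using Finset.induction_on with
  | empty => simp
  | insert i S hi ih =>
    have : IsProbabilityMeasure μ := hlaw i ▸ Measure.isProbabilityMeasure_map (hX i).aemeasurable
    have hff := integral_weightedSum_mul_weightedSum (a := a) hX hlaw hindep hf hf hfC hfC hf₀ hf₀ S
    have hgg := integral_weightedSum_mul_weightedSum (a := a) hX hlaw hindep hg hg hgC hgC hg₀ hg₀ S
    have hfg := integral_weightedSum_mul_weightedSum (a := a) hX hlaw hindep hf hg hfC hgC hf₀ hg₀ S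
    simp only [← sq] at hff hgg
    rw [integral_weightedSum_insert_pow_mul_pow hX hlaw hindep hf hg hfC hgC hi 2 2,
      sum_insert hi, sum_insert hi]
    simp [sum_range_succ, ih, hff, hgg, hfg, integral_weightedSum hX hlaw hf hfC,
      integral_weightedSum hX hlaw hg hgC, hf₀, hg₀]
    ring

theorem integral_weightedSum_sq_mul_sq_le (S : Finset ι) :
    ∫ ω, weightedSum a f X S ω ^ 2 * weightedSum a g X S ω ^ 2 ∂P ≤
      ((∫ x, f x ^ 2 * g x ^ 2 ∂μ) + (∫ x, f x ^ 2 ∂μ) * (∫ x, g x ^ 2 ∂μ) +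
        2 * (∫ x, f x * g x ∂μ) ^ 2) * (∑ l ∈ S, a l ^ 2) ^ 2 := by
  rw [integral_weightedSum_sq_mul_sq hX hlaw hindep hf hg hfC hgC hf₀ hg₀]
  have hm22 : 0 ≤ ∫ x, f x ^ 2 * g x ^ 2 ∂μ := integral_nonneg fun x => by positivity
  have hm20 : 0 ≤ ∫ x, f x ^ 2 ∂μ := integral_nonneg fun x => by positivity
  have hm02 : 0 ≤ ∫ x, g x ^ 2 ∂μ := integral_nonneg fun x => by positivity
  have h4 : 0 ≤ ∑ l ∈ S, a l ^ 4 := sum_nonneg fun l _ => by positivity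
  have h42 : ∑ l ∈ S, a l ^ 4 ≤ (∑ l ∈ S, a l ^ 2) ^ 2 := by
    simpa only [← pow_mul] using sum_sq_le_sq_sum_of_nonneg (s := S) fun l _ => sq_nonneg (a l)
  nlinarith [mul_nonneg hm20 hm02, sq_nonneg (∫ x, f x * g x ∂μ)]

end WeightedSum

section CenteredIndicator

variable {β : Type*} [MeasurableSpace β] {μ : Measure β} {E E₁ E₂ : Set β}

noncomputable def centeredIndicator (μ : Measure β) (E : Set β) (x : β) : ℝ :=
  E.indicator 1 x - μ.real E

lemma measurable_centeredIndicator (hE : MeasurableSet E) :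
    Measurable (centeredIndicator μ E) :=
  (measurable_const.indicator hE).sub measurable_const

omit [MeasurableSpace β] in
lemma indicator_one_sq (E : Set β) (x : β) : E.indicator (1 : β → ℝ) x ^ 2 = E.indicator 1 x := by
  by_cases hx : x ∈ E <;> simp [hx]

omit [MeasurableSpace β] in
lemma indicator_one_mul_indicator_one_of_disjoint (hE : Disjoint E₁ E₂) (x : β) :
    E₁.indicator (1 : β → ℝ) x * E₂.indicator 1 x = 0 := by
  rw [← Pi.mul_apply, ← Set.inter_indicator_one, hE.inter_eq, Set.indicator_empty]

lemma centeredIndicator_mul_eq (hE : Disjoint E₁ E₂) (x : β) :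
    centeredIndicator μ E₁ x * centeredIndicator μ E₂ x =
      -μ.real E₂ * E₁.indicator 1 x + -μ.real E₁ * E₂.indicator 1 x + μ.real E₁ * μ.real E₂ := by
  unfold centeredIndicator
  linear_combination indicator_one_mul_indicator_one_of_disjoint hE x

variable [IsProbabilityMeasure μ]

lemma abs_centeredIndicator_le_one (x : β) : |centeredIndicator μ E x| ≤ 1 := by
  have h₀ : 0 ≤ μ.real E := measureReal_nonneg
  have h₁ : μ.real E ≤ 1 := measureReal_le_one
  rw [abs_le]
  by_cases hx : x ∈ E <;> simp only [centeredIndicator, hx, Set.indicator_of_mem,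
    Set.indicator_of_notMem, not_false_eq_true, Pi.one_apply] <;> constructor <;> linarith

lemma integral_indicator_add_indicator_add_const (hE₁ : MeasurableSet E₁)
    (hE₂ : MeasurableSet E₂) (b₁ b₂ c : ℝ) :
    ∫ x, b₁ * E₁.indicator 1 x + b₂ * E₂.indicator 1 x + c ∂μ =
      b₁ * μ.real E₁ + b₂ * μ.real E₂ + c := by
  have hint : ∀ {E : Set β}, MeasurableSet E → Integrable (E.indicator (1 : β → ℝ)) μ :=
    fun hE => (integrable_const 1).indicator hE
  have hsum : Integrable (fun x => b₁ * E₁.indicator 1 x + b₂ * E₂.indicator 1 x) μ :=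
    ((hint hE₁).const_mul _).add ((hint hE₂).const_mul _)
  rw [integral_add hsum (integrable_const _),
    integral_add ((hint hE₁).const_mul _) ((hint hE₂).const_mul _), integral_const_mul,
    integral_const_mul, integral_indicator_one hE₁, integral_indicator_one hE₂, integral_const]
  simp

lemma integral_centeredIndicator (hE : MeasurableSet E) : ∫ x, centeredIndicator μ E x ∂μ = 0 := by
  calc ∫ x, centeredIndicator μ E x ∂μ
      = ∫ x, 1 * E.indicator 1 x + 0 * E.indicator 1 x + -μ.real E ∂μ := by
        congr 1 with x; simp only [centeredIndicator]; ring
    _ = 0 := by rw [integral_indicator_add_indicator_add_const hE hE]; ring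

lemma integral_centeredIndicator_sq (hE : MeasurableSet E) :
    ∫ x, centeredIndicator μ E x ^ 2 ∂μ = μ.real E * (1 - μ.real E) := by
  calc ∫ x, centeredIndicator μ E x ^ 2 ∂μ
      = ∫ x, (1 - 2 * μ.real E) * E.indicator 1 x + 0 * E.indicator 1 x + μ.real E ^ 2 ∂μ := by
        congr 1 with x
        unfold centeredIndicator
        linear_combination indicator_one_sq E x
    _ = μ.real E * (1 - μ.real E) := by
        rw [integral_indicator_add_indicator_add_const hE hE]; ring

variable (hE₁ : MeasurableSet E₁) (hE₂ : MeasurableSet E₂) (hE : Disjoint E₁ E₂)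
include hE₁ hE₂ hE

lemma integral_centeredIndicator_mul :
    ∫ x, centeredIndicator μ E₁ x * centeredIndicator μ E₂ x ∂μ = -(μ.real E₁ * μ.real E₂) := by
  simp_rw [centeredIndicator_mul_eq hE, integral_indicator_add_indicator_add_const hE₁ hE₂]
  ring

lemma integral_centeredIndicator_sq_mul_sq :
    ∫ x, centeredIndicator μ E₁ x ^ 2 * centeredIndicator μ E₂ x ^ 2 ∂μ =
      μ.real E₁ * μ.real E₂ * (μ.real E₁ + μ.real E₂ - 3 * μ.real E₁ * μ.real E₂) := by
  set p := μ.real E₁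
  set q := μ.real E₂
  have h : ∀ x, centeredIndicator μ E₁ x ^ 2 * centeredIndicator μ E₂ x ^ 2 =
      (q ^ 2 - 2 * p * q ^ 2) * E₁.indicator 1 x + (p ^ 2 - 2 * p ^ 2 * q) * E₂.indicator 1 x +
        p ^ 2 * q ^ 2 := fun x => by
    rw [← mul_pow, centeredIndicator_mul_eq hE]
    linear_combination q ^ 2 * indicator_one_sq E₁ x + p ^ 2 * indicator_one_sq E₂ x +
      2 * p * q * indicator_one_mul_indicator_one_of_disjoint hE x
  simp_rw [h, integral_indicator_add_indicator_add_const hE₁ hE₂]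
  ring

theorem integral_centeredIndicator_fourth_moments :
    (∫ x, centeredIndicator μ E₁ x ^ 2 * centeredIndicator μ E₂ x ^ 2 ∂μ) +
        (∫ x, centeredIndicator μ E₁ x ^ 2 ∂μ) * (∫ x, centeredIndicator μ E₂ x ^ 2 ∂μ) +
        2 * (∫ x, centeredIndicator μ E₁ x * centeredIndicator μ E₂ x ∂μ) ^ 2 =
      μ.real E₁ * μ.real E₂ := by
  rw [integral_centeredIndicator_sq_mul_sq hE₁ hE₂ hE, integral_centeredIndicator_sq hE₁,
    integral_centeredIndicator_sq hE₂, integral_centeredIndicator_mul hE₁ hE₂ hE]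
  ring

end CenteredIndicator

theorem integral_weightedSum_centeredIndicator_sq_mul_sq_le {Ω ι β : Type*} [MeasurableSpace Ω]
    [MeasurableSpace β] [DecidableEq ι] {P : Measure Ω} [IsProbabilityMeasure P] {μ : Measure β}
    [IsProbabilityMeasure μ] {X : ι → Ω → β} (hX : ∀ l, Measurable (X l))
    (hlaw : ∀ l, P.map (X l) = μ) (hindep : iIndepFun X P) {E₁ E₂ : Set β}
    (hE₁ : MeasurableSet E₁) (hE₂ : MeasurableSet E₂) (hE : Disjoint E₁ E₂) (a : ι → ℝ)
    (S : Finset ι) :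
    ∫ ω, weightedSum a (centeredIndicator μ E₁) X S ω ^ 2 *
        weightedSum a (centeredIndicator μ E₂) X S ω ^ 2 ∂P ≤
      μ.real E₁ * μ.real E₂ * (∑ l ∈ S, a l ^ 2) ^ 2 := by
  have h := integral_weightedSum_sq_mul_sq_le (a := a) hX hlaw hindep
    (measurable_centeredIndicator hE₁) (measurable_centeredIndicator hE₂)
    abs_centeredIndicator_le_one abs_centeredIndicator_le_one
    (integral_centeredIndicator hE₁) (integral_centeredIndicator hE₂) S
  rwa [integral_centeredIndicator_fourth_moments hE₁ hE₂ hE] at h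

section Interval

variable {μ : Measure ℝ} [IsFiniteMeasure μ] {u v : ℝ}

lemma measureReal_Ioc_eq_sub (huv : u ≤ v) :
    μ.real (Set.Ioc u v) = μ.real (Set.Iic v) - μ.real (Set.Iic u) := by
  rw [← Set.Iic_sdiff_Iic, measureReal_sdiff (Set.Iic_subset_Iic.2 huv) measurableSet_Iic]

lemma centeredIndicator_Ioc (huv : u ≤ v) (x : ℝ) :
    centeredIndicator μ (Set.Ioc u v) x =
      ((if x ≤ v then 1 else 0) - μ.real (Set.Iic v)) -
        ((if x ≤ u then 1 else 0) - μ.real (Set.Iic u)) := by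
  simp only [centeredIndicator, measureReal_Ioc_eq_sub huv, Set.indicator_apply, Set.mem_Ioc,
    Pi.one_apply]
  split_ifs <;> grind

lemma weightedSum_centeredIndicator_Ioc {Ω ι : Type*} {X : ι → Ω → ℝ} {F : ℝ → ℝ}
    (hF : ∀ u, F u = μ.real (Set.Iic u)) (huv : u ≤ v) (a : ι → ℝ) (S : Finset ι) (ω : Ω) :
    weightedSum a (centeredIndicator μ (Set.Ioc u v)) X S ω =
      ∑ l ∈ S, a l * ((if X l ω ≤ v then 1 else 0) - F v) -
        ∑ l ∈ S, a l * ((if X l ω ≤ u then 1 else 0) - F u) := by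
  rw [weightedSum, ← sum_sub_distrib]
  refine sum_congr rfl fun l _ => ?_
  rw [centeredIndicator_Ioc huv, hF, hF]
  ring

end Interval

/-- Fourth-moment bound for the sampled empirical process:
`E[(Y_n(t) − Y_n(s))² (Y_n(r) − Y_n(t))²] ≤ C (F(r) − F(s))²` for `s ≤ t ≤ r`. -/
theorem stmt10 {Ω : Type*} [MeasurableSpace Ω] (P : Measure Ω) [IsProbabilityMeasure P]
    (d : ℕ) (z : ℕ → (Fin d → ℤ))
    (X : (Fin d → ℤ) → Ω → ℝ)
    (hmeas : ∀ l, Measurable (X l))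
    (hindep : iIndepFun X P)
    (hident : ∀ l, IdentDistrib (X l) (X 0) P P)
    (F : ℝ → ℝ) (hF : ∀ s, F s = (P {ω | X 0 ω ≤ s}).toReal)
    (Y : ℕ → ℝ → Ω → ℝ)
    (hY : ∀ n u ω, Y n u ω =
      (∑ l ∈ (Finset.range n).image z, (localTime d z n l : ℝ) *
          ((if X l ω ≤ u then (1 : ℝ) else 0) - F u)) / Real.sqrt (selfInt d z n)) :
    ∃ C : ℝ, ∀ (n : ℕ) (s t r : ℝ), s ≤ t → t ≤ r →
      ∫ ω, (Y n t ω - Y n s ω) ^ 2 * (Y n r ω - Y n t ω) ^ 2 ∂P ≤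
        C * (F r - F s) ^ 2 := by
  set μ := P.map (X 0)
  have : IsProbabilityMeasure μ := Measure.isProbabilityMeasure_map (hmeas 0).aemeasurable
  have hlaw : ∀ l, P.map (X l) = μ := fun l => (hident l).map_eq
  have hFμ : ∀ u, F u = μ.real (Set.Iic u) := fun u => by
    rw [hF, measureReal_def, Measure.map_apply (hmeas 0) measurableSet_Iic]
    rfl
  refine ⟨1 / 4, fun n s t r hst htr => ?_⟩
  set S := (Finset.range n).image z
  set a : (Fin d → ℤ) → ℝ := fun l => localTime d z n l
  set V : ℝ := (selfInt d z n : ℝ)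
  have hV : V = ∑ l ∈ S, a l ^ 2 := by simp [V, a, S, selfInt]
  have hincr : ∀ {u v}, u ≤ v → ∀ ω, Y n v ω - Y n u ω =
      weightedSum a (centeredIndicator μ (Set.Ioc u v)) X S ω / √V := fun huv ω => by
    rw [hY, hY, ← sub_div, weightedSum_centeredIndicator_Ioc hFμ huv]
  have hbound := integral_weightedSum_centeredIndicator_sq_mul_sq_le hmeas hlaw hindep
    (E₁ := Set.Ioc s t) (E₂ := Set.Ioc t r) measurableSet_Ioc measurableSet_Ioc
    (Set.Ioc_disjoint_Ioc_of_le le_rfl) a S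
  rw [← hV, measureReal_Ioc_eq_sub hst, measureReal_Ioc_eq_sub htr, ← hFμ, ← hFμ, ← hFμ]
    at hbound
  have hV0 : 0 ≤ V := Nat.cast_nonneg _
  simp_rw [hincr hst, hincr htr, div_pow, Real.sq_sqrt hV0, div_mul_div_comm]
  rw [integral_div]
  refine div_le_of_le_mul₀ (by positivity) (by positivity) (hbound.trans ?_)
  nlinarith [sq_nonneg (F t - F s - (F r - F t)), sq_nonneg V]
end

section
/- Let (X, μ, T) be an ergodic measure-preserving system and f : X → Z^d measurable. With M_n(x) and V_n(x) the maximal local time and self-intersection count of the orbit (f_k(x))_{1 ≤ k ≤ n}, one has lim_n [M_n(x)^2/V_n(x) − M_n(Tx)^2/V_n(Tx)] = 0 for every x, and hence there exists a constant γ ∈ [0,1] such that limsup_n M_n(x)^2/V_n(x) = γ for μ-a.e. x. -/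
/-!
Appending one point `a` to a finite multiset `s` raises the maximal multiplicity `M` by at most
one and the sum of squared multiplicities `V` by `2 * count a s + 1 ≤ 2 M + 1`. Since `M ^ 2 ≤ V`
and `card s ≤ V`, the ratio `M ^ 2 / V` moves by at most `3 / √(card s)`. The values
`f_1(x), …, f_{n+1}(x)` and `f_1(T x), …, f_{n+1}(T x)` are both obtained from
`f_1(T x), …, f_n(T x)` by adding one point, up to the translation by `f x`, which changes no
multiplicity. Hence the ratios at `x` and `T x` are asymptotically equal, the `limsup` is
`T`-invariant, and ergodicity makes it a.e. constant.
-/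

open Finset MeasureTheory Filter

/-- Ergodic sums `f_k(x) = ∑_{j<k} f(T^j x)`. -/
def ergSum {X : Type*} (d : ℕ) (T : X → X) (f : X → (Fin d → ℤ)) (k : ℕ) (x : X) :
    Fin d → ℤ :=
  ∑ j ∈ Finset.range k, f (T^[j] x)

/-- Local time `N_n(x, l) = #{1 ≤ k ≤ n : f_k(x) = l}`. -/
def cocLocalTime {X : Type*} (d : ℕ) (T : X → X) (f : X → (Fin d → ℤ)) (n : ℕ) (x : X)
    (l : Fin d → ℤ) : ℕ :=
  ((Finset.Icc 1 n).filter fun k => ergSum d T f k x = l).card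

/-- Maximal local time `M_n(x)`. -/
def cocMaxLocalTime {X : Type*} (d : ℕ) (T : X → X) (f : X → (Fin d → ℤ)) (n : ℕ)
    (x : X) : ℕ :=
  ((Finset.Icc 1 n).image (fun k => ergSum d T f k x)).sup (cocLocalTime d T f n x)

/-- Self-intersection count `V_n(x)`. -/
def cocSelfInt {X : Type*} (d : ℕ) (T : X → X) (f : X → (Fin d → ℤ)) (n : ℕ) (x : X) : ℕ :=
  ∑ l ∈ (Finset.Icc 1 n).image (fun k => ergSum d T f k x), (cocLocalTime d T f n x l) ^ 2

open Topology

theorem abs_sq_div_sub_sq_div_le {c c' W W' : ℝ} (hc : 0 ≤ c) (hcc' : c ≤ c') (hc'c : c' ≤ c + 1)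
    (hW : 0 < W) (hWW' : W ≤ W') (hW'W : W' ≤ W + 2 * c + 1) (hcW : c ^ 2 ≤ W) :
    |c' ^ 2 / W' - c ^ 2 / W| ≤ (2 * c + 1) / W := by
  have hW' : 0 < W' := hW.trans_le hWW'
  have hsplit :
      c' ^ 2 / W' - c ^ 2 / W = (c' ^ 2 - c ^ 2) / W' - c ^ 2 / W * ((W' - W) / W') := by
    field_simp
    ring
  rw [hsplit]
  apply abs_sub_le_of_nonneg_of_le
  · have : c ^ 2 ≤ c' ^ 2 := pow_le_pow_left₀ hc hcc' 2
    exact div_nonneg (by linarith) hW'.le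
  · calc (c' ^ 2 - c ^ 2) / W' ≤ (2 * c + 1) / W' := by gcongr; nlinarith
      _ ≤ (2 * c + 1) / W := by gcongr
  · have : 0 ≤ W' - W := by linarith
    positivity
  · calc c ^ 2 / W * ((W' - W) / W') ≤ 1 * ((2 * c + 1) / W') :=
          mul_le_mul ((div_le_one hW).2 hcW) (by gcongr; linarith)
            (div_nonneg (by linarith) hW'.le) zero_le_one
      _ ≤ (2 * c + 1) / W := by rw [one_mul]; gcongr

theorem two_mul_add_one_div_le_three_div_sqrt {c W : ℝ} (hW : 1 ≤ W) (hcW : c ^ 2 ≤ W) :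
    (2 * c + 1) / W ≤ 3 / √W := by
  have hsW : 1 ≤ √W := Real.one_le_sqrt.2 hW
  have hcs : c ≤ √W := Real.le_sqrt_of_sq_le hcW
  calc (2 * c + 1) / W ≤ 3 * √W / W := by gcongr; linarith
    _ = 3 / √W := by
      rw [div_eq_div_iff (by positivity) (by positivity), mul_assoc,
        Real.mul_self_sqrt (by linarith)]

theorem limsup_add_eq_of_tendsto_zero {ι : Type*} {l : Filter ι} [l.NeBot] {u w : ι → ℝ}
    (hu_le : IsBoundedUnder (· ≤ ·) l u) (hu_ge : IsBoundedUnder (· ≥ ·) l u)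
    (hw : Tendsto w l (𝓝 0)) : limsup (u + w) l = limsup u l := by
  have hu_cobdd : IsCoboundedUnder (· ≤ ·) l u := hu_ge.isCoboundedUnder_flip
  refine le_antisymm ?_ ?_
  · calc limsup (u + w) l ≤ limsup u l + limsup w l :=
          limsup_add_le hu_ge hu_le hw.isBoundedUnder_ge.isCoboundedUnder_flip hw.isBoundedUnder_le
      _ = limsup u l := by rw [hw.limsup_eq, add_zero]
  · calc limsup u l = limsup u l + liminf w l := by rw [hw.liminf_eq, add_zero]
      _ ≤ limsup (u + w) l :=
          le_limsup_add hu_le hu_cobdd hw.isBoundedUnder_le hw.isBoundedUnder_ge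

theorem limsup_mem_Icc {ι : Type*} {l : Filter ι} [l.NeBot] {u : ι → ℝ} {a b : ℝ}
    (h : ∀ i, u i ∈ Set.Icc a b) : limsup u l ∈ Set.Icc a b :=
  ⟨le_limsup_of_frequently_le (Frequently.of_forall fun i => (h i).1)
      (isBoundedUnder_of ⟨b, fun i => (h i).2⟩),
    limsup_le_of_le (isCoboundedUnder_le_of_le l fun i => (h i).1)
      (Eventually.of_forall fun i => (h i).2)⟩

namespace Multiset

variable {α β : Type*} [DecidableEq α] [DecidableEq β]

def maxCount (s : Multiset α) : ℕ := s.toFinset.sup fun a => s.count a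

def sqCount (s : Multiset α) : ℕ := ∑ a ∈ s.toFinset, s.count a ^ 2

noncomputable def maxCountRatio (s : Multiset α) : ℝ := (maxCount s : ℝ) ^ 2 / sqCount s

theorem count_le_maxCount (s : Multiset α) (a : α) : s.count a ≤ maxCount s := by
  by_cases ha : a ∈ s
  · exact Finset.le_sup (f := fun a => s.count a) (mem_toFinset.2 ha)
  · simp [count_eq_zero_of_notMem ha]

theorem maxCount_le {s : Multiset α} {m : ℕ} (h : ∀ a, s.count a ≤ m) : maxCount s ≤ m :=
  Finset.sup_le fun a _ => h a

theorem maxCount_le_maxCount_cons (a : α) (s : Multiset α) :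
    maxCount s ≤ maxCount (a ::ₘ s) :=
  maxCount_le fun b => (count_le_of_le b (le_cons_self s a)).trans (count_le_maxCount _ b)

theorem maxCount_cons_le (a : α) (s : Multiset α) : maxCount (a ::ₘ s) ≤ maxCount s + 1 :=
  maxCount_le fun b => by
    rw [count_cons]
    have := count_le_maxCount s b
    split_ifs <;> omega

theorem sum_map_ite_eq_count (a : α) (s : Multiset α) :
    (s.map fun b => if b = a then 1 else 0).sum = s.count a := by
  induction s using Multiset.induction_on with
  | empty => simp
  | cons b s ih =>
    rw [map_cons, sum_cons, ih, count_cons, add_comm]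
    simp only [eq_comm]

theorem sqCount_eq_sum_map_count (s : Multiset α) :
    sqCount s = (s.map fun a => s.count a).sum := by
  simp [sqCount, Finset.sum_multiset_map_count, sq]

theorem sqCount_cons (a : α) (s : Multiset α) :
    sqCount (a ::ₘ s) = sqCount s + 2 * s.count a + 1 := by
  simp only [sqCount_eq_sum_map_count, map_cons, sum_cons, count_cons, sum_map_add,
    sum_map_ite_eq_count, if_true]
  ring

theorem card_le_sqCount (s : Multiset α) : card s ≤ sqCount s := by
  rw [← toFinset_sum_count_eq]
  exact Finset.sum_le_sum fun a _ => Nat.le_self_pow two_ne_zero _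

theorem maxCount_sq_le_sqCount (s : Multiset α) : maxCount s ^ 2 ≤ sqCount s := by
  rcases s.toFinset.eq_empty_or_nonempty with h | h
  · simp [maxCount, sqCount, h]
  · obtain ⟨a, ha, hmax⟩ := Finset.exists_mem_eq_sup _ h fun a => s.count a
    rw [maxCount, hmax]
    exact Finset.single_le_sum (f := fun a => s.count a ^ 2) (fun _ _ => Nat.zero_le _) ha

theorem maxCountRatio_mem_Icc (s : Multiset α) : maxCountRatio s ∈ Set.Icc (0 : ℝ) 1 := by
  refine ⟨by unfold maxCountRatio; positivity, div_le_one_of_le₀ ?_ (Nat.cast_nonneg _)⟩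
  exact_mod_cast maxCount_sq_le_sqCount s

theorem maxCountRatio_map_of_injective {g : α → β} (hg : g.Injective) (s : Multiset α) :
    maxCountRatio (s.map g) = maxCountRatio s := by
  have hmax : maxCount (s.map g) = maxCount s := by
    rw [maxCount, toFinset_map, Finset.sup_image]
    exact Finset.sup_congr rfl fun a _ => count_map_eq_count' g s hg a
  have hsq : sqCount (s.map g) = sqCount s := by
    rw [sqCount, toFinset_map, Finset.sum_image fun a _ b _ h => hg h]
    exact Finset.sum_congr rfl fun a _ => by rw [count_map_eq_count' g s hg a]
  rw [maxCountRatio, maxCountRatio, hmax, hsq]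

theorem abs_maxCountRatio_cons_sub_le (a : α) {s : Multiset α} (hs : s ≠ 0) :
    |maxCountRatio (a ::ₘ s) - maxCountRatio s| ≤ 3 / √(card s) := by
  have hcard : (1 : ℝ) ≤ card s := by exact_mod_cast card_pos.2 hs
  have hcardW : (card s : ℝ) ≤ sqCount s := by exact_mod_cast card_le_sqCount s
  have hcW : (maxCount s : ℝ) ^ 2 ≤ sqCount s := by exact_mod_cast maxCount_sq_le_sqCount s
  have hV := sqCount_cons a s
  have hcount := count_le_maxCount s a
  calc |maxCountRatio (a ::ₘ s) - maxCountRatio s|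
      ≤ (2 * maxCount s + 1) / (sqCount s : ℝ) := by
        apply abs_sq_div_sub_sq_div_le (Nat.cast_nonneg _)
        · exact_mod_cast maxCount_le_maxCount_cons a s
        · exact_mod_cast maxCount_cons_le a s
        · linarith
        · exact_mod_cast (by omega : sqCount s ≤ sqCount (a ::ₘ s))
        · exact_mod_cast (by omega : sqCount (a ::ₘ s) ≤ sqCount s + 2 * maxCount s + 1)
        · exact hcW
    _ ≤ 3 / √(sqCount s : ℝ) := two_mul_add_one_div_le_three_div_sqrt (hcard.trans hcardW) hcW
    _ ≤ 3 / √(card s : ℝ) := by gcongr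

end Multiset

section ErgodicSums

variable {X : Type*} {d : ℕ} {T : X → X} {f : X → (Fin d → ℤ)}

theorem ergSum_zero (x : X) : ergSum d T f 0 x = 0 := by simp [ergSum]

theorem ergSum_succ (k : ℕ) (x : X) : ergSum d T f (k + 1) x = f x + ergSum d T f k (T x) := by
  simp only [ergSum, Finset.sum_range_succ', Function.iterate_succ_apply,
    Function.iterate_zero_apply, add_comm]

variable (d T f) in
def orbitValues (n : ℕ) (x : X) : Multiset (Fin d → ℤ) :=
  (Icc 1 n).val.map (ergSum d T f · x)

theorem card_orbitValues (n : ℕ) (x : X) : Multiset.card (orbitValues d T f n x) = n := by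
  simp [orbitValues]

theorem cocLocalTime_eq_count (n : ℕ) (x : X) (l : Fin d → ℤ) :
    cocLocalTime d T f n x l = (orbitValues d T f n x).count l := by
  simp [cocLocalTime, orbitValues, Multiset.count_map, Finset.card_def, eq_comm]

theorem cocMaxLocalTime_eq_maxCount (n : ℕ) (x : X) :
    cocMaxLocalTime d T f n x = (orbitValues d T f n x).maxCount := by
  simp only [cocMaxLocalTime, Multiset.maxCount, funext (cocLocalTime_eq_count n x)]
  rfl

theorem cocSelfInt_eq_sqCount (n : ℕ) (x : X) :
    cocSelfInt d T f n x = (orbitValues d T f n x).sqCount := by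
  simp only [cocSelfInt, Multiset.sqCount, cocLocalTime_eq_count]
  rfl

theorem cocMaxLocalTime_sq_div_cocSelfInt (n : ℕ) (x : X) :
    (cocMaxLocalTime d T f n x : ℝ) ^ 2 / cocSelfInt d T f n x =
      (orbitValues d T f n x).maxCountRatio := by
  rw [cocMaxLocalTime_eq_maxCount, cocSelfInt_eq_sqCount, Multiset.maxCountRatio]

theorem orbitValues_succ (n : ℕ) (x : X) :
    orbitValues d T f (n + 1) x = ergSum d T f (n + 1) x ::ₘ orbitValues d T f n x := by
  rw [orbitValues, ← insert_Icc_right_eq_Icc_add_one (by omega), insert_val_of_notMem (by simp),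
    Multiset.map_cons, orbitValues]

theorem orbitValues_succ_eq_map_cons (n : ℕ) (x : X) :
    orbitValues d T f (n + 1) x = (0 ::ₘ orbitValues d T f n (T x)).map (f x + ·) := by
  have hIcc : (Icc 1 (n + 1)).val = (Icc 0 n).val.map (· + 1) :=
    (Multiset.map_add_right_Icc 0 n 1).symm
  rw [orbitValues, hIcc, ← insert_Icc_add_one_left_eq_Icc (Nat.zero_le n),
    insert_val_of_notMem (by simp)]
  simp [Multiset.map_map, ergSum_succ, ergSum_zero, orbitValues]

theorem tendsto_maxCountRatio_orbitValues_sub (x : X) :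
    Tendsto (fun n => (orbitValues d T f n x).maxCountRatio -
      (orbitValues d T f n (T x)).maxCountRatio) atTop (𝓝 0) := by
  have hbound : ∀ n ≥ 1, |(orbitValues d T f (n + 1) x).maxCountRatio -
      (orbitValues d T f (n + 1) (T x)).maxCountRatio| ≤ 6 / √n := by
    intro n hn
    rw [orbitValues_succ_eq_map_cons, orbitValues_succ,
      Multiset.maxCountRatio_map_of_injective (add_right_injective _)]
    set s := orbitValues d T f n (T x)
    have hs : s ≠ 0 := by rw [← Multiset.card_pos, card_orbitValues]; omega
    have h₀ := Multiset.abs_maxCountRatio_cons_sub_le 0 hs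
    have h₁ := Multiset.abs_maxCountRatio_cons_sub_le (ergSum d T f (n + 1) (T x)) hs
    rw [card_orbitValues] at h₀ h₁
    calc |(0 ::ₘ s).maxCountRatio - (ergSum d T f (n + 1) (T x) ::ₘ s).maxCountRatio|
        ≤ |(0 ::ₘ s).maxCountRatio - s.maxCountRatio| +
          |(ergSum d T f (n + 1) (T x) ::ₘ s).maxCountRatio - s.maxCountRatio| :=
          (abs_sub_le _ s.maxCountRatio _).trans_eq (by rw [abs_sub_comm s.maxCountRatio])
      _ ≤ 3 / √n + 3 / √n := add_le_add h₀ h₁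
      _ = 6 / √n := by ring
  have hlim : Tendsto (fun n : ℕ => 6 / √n) atTop (𝓝 0) :=
    tendsto_const_nhds.div_atTop (Real.tendsto_sqrt_atTop.comp tendsto_natCast_atTop_atTop)
  rw [← tendsto_add_atTop_iff_nat 1]
  refine squeeze_zero_norm' ?_ hlim
  filter_upwards [eventually_ge_atTop 1] with n hn using hbound n hn

theorem limsup_maxCountRatio_orbitValues_apply (x : X) :
    limsup (fun n => (orbitValues d T f n (T x)).maxCountRatio) atTop =
      limsup (fun n => (orbitValues d T f n x).maxCountRatio) atTop := by
  have hbdd (y : X) : ∀ n, (orbitValues d T f n y).maxCountRatio ∈ Set.Icc (0 : ℝ) 1 :=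
    fun n => Multiset.maxCountRatio_mem_Icc _
  rw [← limsup_add_eq_of_tendsto_zero (isBoundedUnder_of ⟨1, fun n => (hbdd (T x) n).2⟩)
    (isBoundedUnder_of ⟨0, fun n => (hbdd (T x) n).1⟩)
    (tendsto_maxCountRatio_orbitValues_sub (T := T) (f := f) x)]
  simp only [Pi.add_def, add_sub_cancel]

theorem measurable_comp_orbitValues [MeasurableSpace X] {β : Type*} [MeasurableSpace β]
    (hT : Measurable T) (hf : Measurable f) (Φ : Multiset (Fin d → ℤ) → β) (n : ℕ) :
    Measurable fun x => Φ (orbitValues d T f n x) := by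
  have hE : ∀ k, Measurable (ergSum d T f k) := fun k =>
    Finset.measurable_sum _ fun j _ => hf.comp (hT.iterate j)
  -- `orbitValues d T f n x` only depends on `f_0(x), …, f_n(x)`, a point of a countable
  -- discrete space.
  have hfactor : (fun x => Φ (orbitValues d T f n x)) =
      (fun v : Fin (n + 1) → Fin d → ℤ =>
          Φ ((Icc 1 n).val.map fun k => v (Fin.ofNat (n + 1) k))) ∘
        fun x i => ergSum d T f i x := by
    funext x
    refine congrArg Φ (Multiset.map_congr rfl fun k hk => ?_)
    have hkn : k < n + 1 := Nat.lt_succ_of_le (Finset.mem_Icc.1 hk).2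
    simp [Nat.mod_eq_of_lt hkn]
  rw [hfactor]
  exact (measurable_of_countable _).comp (measurable_pi_lambda _ fun i => hE i)

end ErgodicSums

theorem stmt13_general {X : Type*} [MeasurableSpace X] (μ : Measure X)
    (T : X → X) (hT : Ergodic T μ)
    (d : ℕ) (f : X → (Fin d → ℤ)) (hf : Measurable f) :
    (∀ x : X, Tendsto (fun n : ℕ =>
        (cocMaxLocalTime d T f n x : ℝ) ^ 2 / (cocSelfInt d T f n x : ℝ) -
          (cocMaxLocalTime d T f n (T x) : ℝ) ^ 2 / (cocSelfInt d T f n (T x) : ℝ))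
      atTop (nhds 0)) ∧
    (∃ γ : ℝ, γ ∈ Set.Icc (0 : ℝ) 1 ∧ ∀ᵐ x ∂μ,
      Filter.limsup (fun n : ℕ =>
        (cocMaxLocalTime d T f n x : ℝ) ^ 2 / (cocSelfInt d T f n x : ℝ)) atTop = γ) := by
  simp only [cocMaxLocalTime_sq_div_cocSelfInt]
  refine ⟨tendsto_maxCountRatio_orbitValues_sub, ?_⟩
  -- Valued in `Icc 0 1`, so that the a.e. value given by ergodicity lies in `[0, 1]`.
  let g : X → Set.Icc (0 : ℝ) 1 := fun x =>
    ⟨limsup (fun n => (orbitValues d T f n x).maxCountRatio) atTop,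
      limsup_mem_Icc fun n => Multiset.maxCountRatio_mem_Icc _⟩
  have hg : Measurable g := (Measurable.limsup fun n =>
    measurable_comp_orbitValues hT.measurable hf Multiset.maxCountRatio n).subtype_mk
  have hg_inv : g ∘ T = g := funext fun x => Subtype.ext (limsup_maxCountRatio_orbitValues_apply x)
  obtain ⟨γ, hγ⟩ := hT.toPreErgodic.ae_eq_const_of_ae_eq_comp hg hg_inv
  exact ⟨γ, γ.2, hγ.mono fun x hx => congrArg Subtype.val hx⟩

/-- `M_n(x)²/V_n(x) − M_n(Tx)²/V_n(Tx) → 0` for every `x`, and by ergodicity the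
`limsup` of `M_n²/V_n` is a.e. equal to a constant `γ ∈ [0,1]`. -/
theorem stmt13 {X : Type*} [MeasurableSpace X] (μ : Measure X) [IsProbabilityMeasure μ]
    (T : X → X) (hT : Ergodic T μ)
    (d : ℕ) (f : X → (Fin d → ℤ)) (hf : Measurable f) :
    (∀ x : X, Tendsto (fun n : ℕ =>
        (cocMaxLocalTime d T f n x : ℝ) ^ 2 / (cocSelfInt d T f n x : ℝ) -
          (cocMaxLocalTime d T f n (T x) : ℝ) ^ 2 / (cocSelfInt d T f n (T x) : ℝ))
      atTop (nhds 0)) ∧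
    (∃ γ : ℝ, γ ∈ Set.Icc (0 : ℝ) 1 ∧ ∀ᵐ x ∂μ,
      Filter.limsup (fun n : ℕ =>
        (cocMaxLocalTime d T f n x : ℝ) ^ 2 / (cocSelfInt d T f n x : ℝ)) atTop = γ) :=
  stmt13_general μ T hT d f hf
end

section
/- Let (X, μ, T) be an ergodic probability measure-preserving system and (φ_k)_{k ≥ 1} a sequence of functions in L^1(X, μ) with ∑_{k≥1} ‖φ_k‖_1 < ∞. Then for μ-a.e. x, lim_n (1/n) ∑_{k=1}^{n-1} ∑_{j=0}^{n-k-1} φ_k(T^j x) = ∑_{k=1}^∞ ∫ φ_k dμ. -/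
/-!
For each fixed `k`, Birkhoff's ergodic theorem gives `(1/n) S_{n-1-k} φ_k (x) → ∫ φ_k`. The terms
are dominated by `(1/n) S_n |φ_k| (x)`, which converge to `∫ |φ_k|` and whose sum over `k` is
`(1/n) S_n Ψ (x)` with `Ψ = ∑ |φ_k|` integrable, so again converges to `∑ ∫ |φ_k|`. A dominated
convergence theorem for series with converging (rather than fixed) dominating sequences then lets
the limit pass through the sum over `k`.

Birkhoff's theorem itself comes from Garsia's maximal ergodic lemma: if `∫ f < β`, the set where the
Birkhoff sums of `f - β` are unbounded above is invariant, hence null or conull, and the maximal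
lemma rules out the conull case.
-/

open Finset MeasureTheory Filter Topology

theorem tendsto_of_forall_eventually_dist_lt {α E : Type*} [PseudoMetricSpace E] {l : Filter α}
    {a : α → E} {b : ℕ → E} {t : ℕ → ℝ} {L : E}
    (hb : Tendsto b atTop (𝓝 L)) (ht : Tendsto t atTop (𝓝 0))
    (h : ∀ K, ∀ ε > 0, ∀ᶠ n in l, dist (a n) (b K) < t K + ε) :
    Tendsto a l (𝓝 L) := by
  refine Metric.tendsto_nhds.2 fun ε hε => ?_
  obtain ⟨K, htK, hbK⟩ := ((ht.eventually (gt_mem_nhds (by positivity : (0 : ℝ) < ε / 3))).and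
    (Metric.tendsto_nhds.1 hb (ε / 3) (by positivity))).exists
  filter_upwards [h K (ε / 3) (by positivity)] with n hn
  linarith [dist_triangle (a n) (b K) L]

theorem tendsto_tsum_of_dominated_convergence_of_tendsto_tsum_bound {α E : Type*}
    [NormedAddCommGroup E] [CompleteSpace E] {l : Filter α} [l.NeBot]
    {f : α → ℕ → E} {g : ℕ → E} {bound : α → ℕ → ℝ} {B : ℕ → ℝ}
    (hf : ∀ k, Tendsto (f · k) l (𝓝 (g k))) (hbound : ∀ k, Tendsto (bound · k) l (𝓝 (B k)))
    (h_summable : ∀ n, Summable (bound n)) (hB : Summable B)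
    (h_tsum : Tendsto (fun n => ∑' k, bound n k) l (𝓝 (∑' k, B k)))
    (h_le : ∀ n k, ‖f n k‖ ≤ bound n k) :
    Tendsto (fun n => ∑' k, f n k) l (𝓝 (∑' k, g k)) := by
  have hg : Summable g := hB.of_norm_bounded fun k =>
    le_of_tendsto_of_tendsto' (hf k).norm (hbound k) fun n => h_le n k
  refine tendsto_of_forall_eventually_dist_lt hg.hasSum.tendsto_sum_nat
    (tendsto_sum_nat_add B) fun K ε hε => ?_
  have htail : Tendsto (fun n => ∑' k, bound n (k + K)) l (𝓝 (∑' k, B (k + K))) := by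
    have := h_tsum.sub (tendsto_finsetSum (range K) fun k _ => hbound k)
    simpa only [← (h_summable _).sum_add_tsum_nat_add K, ← hB.sum_add_tsum_nat_add K,
      add_sub_cancel_left] using this
  have hhead : Tendsto (fun n => ∑ k ∈ range K, f n k) l (𝓝 (∑ k ∈ range K, g k)) :=
    tendsto_finsetSum _ fun k _ => hf k
  filter_upwards [htail.eventually (gt_mem_nhds (lt_add_of_pos_right _ (half_pos hε))),
    Metric.tendsto_nhds.1 hhead (ε / 2) (half_pos hε)] with n htail_n hhead_n
  have hfn_tail : ‖∑' k, f n (k + K)‖ ≤ ∑' k, bound n (k + K) :=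
    tsum_of_norm_bounded ((summable_nat_add_iff K).2 (h_summable n)).hasSum fun k => h_le n _
  have hsplit : dist (∑' k, f n k) (∑ k ∈ range K, f n k) = ‖∑' k, f n (k + K)‖ := by
    rw [dist_eq_norm, ← ((h_summable n).of_norm_bounded (h_le n)).sum_add_tsum_nat_add K,
      add_sub_cancel_left]
  linarith [dist_triangle (∑' k, f n k) (∑ k ∈ range K, f n k) (∑ k ∈ range K, g k)]

section L1Series

variable {X E : Type*} [MeasurableSpace X] {μ : Measure X} [NormedAddCommGroup E] [CompleteSpace E]
  {ι : Type*} [Countable ι] {F : ι → X → E}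

theorem ae_hasSum_tsum_toL1_of_summable_integral_norm (hF : ∀ i, Integrable (F i) μ)
    (hF_sum : Summable fun i => ∫ x, ‖F i x‖ ∂μ) :
    ∀ᵐ x ∂μ, HasSum (fun i => F i x) ((∑' i, (hF i).toL1 (F i) : X →₁[μ] E) x) := by
  have hL1 : ∑' i, ‖(hF i).toL1 (F i)‖ₑ ≠ ⊤ :=
    tsum_enorm_ne_top_iff_summable_norm.2 (by simpa only [L1.norm_of_fun_eq_integral_norm])
  filter_upwards [Lp.hasSum_coeFn_tsum hL1, ae_all_iff.2 fun i => (hF i).coeFn_toL1] with x hx hF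
  simpa only [hF] using hx

theorem ae_summable_of_summable_integral_norm (hF : ∀ i, Integrable (F i) μ)
    (hF_sum : Summable fun i => ∫ x, ‖F i x‖ ∂μ) : ∀ᵐ x ∂μ, Summable fun i => F i x :=
  (ae_hasSum_tsum_toL1_of_summable_integral_norm hF hF_sum).mono fun _ hx => hx.summable

theorem integrable_tsum_of_summable_integral_norm (hF : ∀ i, Integrable (F i) μ)
    (hF_sum : Summable fun i => ∫ x, ‖F i x‖ ∂μ) : Integrable (fun x => ∑' i, F i x) μ :=
  (L1.integrable_coeFn _).congr <|
    (ae_hasSum_tsum_toL1_of_summable_integral_norm hF hF_sum).mono fun _ hx => hx.tsum_eq.symm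

end L1Series

section Lattice

variable {X : Type*} [MeasurableSpace X] {μ : Measure X} {F : ℕ → X → ℝ}

theorem measurable_partialSups (hF : ∀ n, Measurable (F n)) (N : ℕ) :
    Measurable (partialSups F N) := by
  induction N with
  | zero => simpa using hF 0
  | succ N ih =>
    rw [← Order.succ_eq_add_one, partialSups_succ]
    exact ih.sup (hF _)

theorem integrable_partialSups (hF : ∀ n, Integrable (F n) μ) (N : ℕ) :
    Integrable (partialSups F N) μ := by
  induction N with
  | zero => simpa using hF 0
  | succ N ih =>
    rw [← Order.succ_eq_add_one, partialSups_succ]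
    exact ih.sup (hF _)

end Lattice

section MaximalErgodic

variable {X : Type*} {T : X → X} {f : X → ℝ}

theorem partialSups_birkhoffSum_nonneg (N : ℕ) (x : X) :
    0 ≤ partialSups (birkhoffSum T f) N x := by
  simpa using le_partialSups_of_le (birkhoffSum T f) (Nat.zero_le N) x

theorem partialSups_birkhoffSum_le_max (N : ℕ) (x : X) :
    partialSups (birkhoffSum T f) N x ≤ max 0 (f x + partialSups (birkhoffSum T f) N (T x)) := by
  rw [Pi.partialSups_apply]
  refine partialSups_le _ _ _ fun n hn => ?_
  cases n with
  | zero => simp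
  | succ m =>
    rw [birkhoffSum_succ']
    exact le_max_of_le_right <| add_le_add_right
      (le_partialSups_of_le (birkhoffSum T f) (Nat.le_of_succ_le hn) (T x)) _

theorem birkhoffSum_sub_const (c : ℝ) (n : ℕ) (x : X) :
    birkhoffSum T (fun y => f y - c) n x = birkhoffSum T f n x - n * c := by
  simp [birkhoffSum, sum_sub_distrib]

variable [MeasurableSpace X] {μ : Measure X}

theorem measurable_birkhoffSum (hT : Measurable T) (hf : Measurable f) (n : ℕ) :
    Measurable (birkhoffSum T f n) :=
  measurable_sum _ fun i _ => hf.comp (hT.iterate i)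

theorem MeasureTheory.MeasurePreserving.setIntegral_partialSups_birkhoffSum_pos_nonneg
    (hT : MeasurePreserving T μ μ) (hfm : Measurable f) (hf : Integrable f μ) (N : ℕ) :
    0 ≤ ∫ x in {x | 0 < partialSups (birkhoffSum T f) N x}, f x ∂μ := by
  set M := partialSups (birkhoffSum T f) N
  set A := {x | 0 < M x}
  have hS : ∀ n, Integrable (birkhoffSum T f n) μ := fun n =>
    integrable_finsetSum _ fun i _ => (hT.iterate i).integrable_comp_of_integrable hf
  have hMm : Measurable M :=
    measurable_partialSups (measurable_birkhoffSum hT.measurable hfm) N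
  have hM : Integrable M μ := integrable_partialSups hS N
  have hMT : Integrable (fun x => M (T x)) μ := hT.integrable_comp_of_integrable hM
  have hA : MeasurableSet A := measurableSet_lt measurable_const hMm
  have hM_comp : ∫ x, M (T x) ∂μ = ∫ x, M x ∂μ := by
    rw [← integral_map hT.measurable.aemeasurable (hT.map_eq ▸ hMm.aestronglyMeasurable), hT.map_eq]
  -- `M` vanishes off `A`, and on `A` the bound `M ≤ max 0 (f + M ∘ T)` becomes `M - M ∘ T ≤ f`.
  have hM_A : ∫ x in A, M x ∂μ = ∫ x, M x ∂μ :=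
    setIntegral_eq_integral_of_forall_compl_eq_zero fun x hx =>
      le_antisymm (not_lt.1 hx) (partialSups_birkhoffSum_nonneg N x)
  have hMT_A : ∫ x in A, M (T x) ∂μ ≤ ∫ x, M (T x) ∂μ :=
    setIntegral_le_integral hMT (.of_forall fun x => partialSups_birkhoffSum_nonneg N (T x))
  have hdiff : ∫ x in A, (M x - M (T x)) ∂μ ≤ ∫ x in A, f x ∂μ := by
    refine setIntegral_mono_on (hM.sub hMT).integrableOn hf.integrableOn hA fun x hx => ?_
    have hx' : M x ≤ f x + M (T x) :=
      (le_max_iff.1 (partialSups_birkhoffSum_le_max N x)).resolve_left (not_le.2 hx)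
    linarith
  rw [integral_sub hM.integrableOn hMT.integrableOn] at hdiff
  linarith

theorem MeasureTheory.MeasurePreserving.setIntegral_exists_birkhoffSum_pos_nonneg
    (hT : MeasurePreserving T μ μ) (hfm : Measurable f) (hf : Integrable f μ) :
    0 ≤ ∫ x in {x | ∃ n, 0 < birkhoffSum T f n x}, f x ∂μ := by
  set A : ℕ → Set X := fun N => {x | 0 < partialSups (birkhoffSum T f) N x}
  have hA : ∀ N, MeasurableSet (A N) := fun N => measurableSet_lt measurable_const <|
    measurable_partialSups (measurable_birkhoffSum hT.measurable hfm) N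
  have hA_mono : Monotone A := fun M N hMN x hx =>
    lt_of_lt_of_le hx ((partialSups (birkhoffSum T f)).monotone hMN x)
  have hA_iUnion : ⋃ N, A N = {x | ∃ n, 0 < birkhoffSum T f n x} := by
    ext x
    simp only [A, Set.mem_iUnion, Set.mem_ofPred_eq, Pi.partialSups_apply]
    constructor
    · rintro ⟨N, hN⟩
      obtain ⟨n, -, hn⟩ := exists_partialSups_eq (birkhoffSum T f · x) N
      exact ⟨n, hn ▸ hN⟩
    · rintro ⟨n, hn⟩
      exact ⟨n, hn.trans_le (le_partialSups (birkhoffSum T f · x) n)⟩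
  rw [← hA_iUnion]
  exact ge_of_tendsto' (tendsto_setIntegral_of_monotone hA hA_mono hf.integrableOn)
    (hT.setIntegral_partialSups_birkhoffSum_pos_nonneg hfm hf)

end MaximalErgodic

section Birkhoff

variable {X : Type*} [MeasurableSpace X] {μ : Measure X} [IsProbabilityMeasure μ] {T : X → X}
  {f : X → ℝ}

theorem Ergodic.ae_eventually_birkhoffSum_le (hT : Ergodic T μ) (hfm : Measurable f)
    (hf : Integrable f μ) {α : ℝ} (hα : ∫ x, f x ∂μ < α) :
    ∀ᵐ x ∂μ, ∀ᶠ n in atTop, birkhoffSum T f n x ≤ α * n := by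
  obtain ⟨β, hfβ, hβα⟩ := exists_between hα
  set g : X → ℝ := fun x => f x - β
  have hgm : Measurable g := hfm.sub measurable_const
  have hg : Integrable g μ := hf.sub (integrable_const β)
  have hg_neg : ∫ x, g x ∂μ < 0 := by
    simp only [g, integral_sub hf (integrable_const β), integral_const, probReal_univ, smul_eq_mul,
      one_mul]
    linarith
  -- `B` is `T`-invariant because `S_{n+1} g = g + S_n g ∘ T`.
  set B := {x | ∀ C : ℝ, ∃ n, C < birkhoffSum T g n x}
  have hB : MeasurableSet B := by
    have : B = ⋂ C : ℕ, ⋃ n, {x | (C : ℝ) < birkhoffSum T g n x} := by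
      ext x
      simp only [B, Set.mem_iInter, Set.mem_iUnion, Set.mem_ofPred_eq]
      exact ⟨fun h C => h C, fun h C => (h ⌈C⌉₊).imp fun n hn => (Nat.le_ceil C).trans_lt hn⟩
    rw [this]
    exact .iInter fun C => .iUnion fun n =>
      measurableSet_lt measurable_const (measurable_birkhoffSum hT.measurable hgm n)
  have hB_inv : T ⁻¹' B = B := by
    ext x
    simp only [B, Set.mem_preimage, Set.mem_ofPred_eq]
    constructor
    · intro h C
      obtain ⟨n, hn⟩ := h (C - g x)
      exact ⟨n + 1, by rw [birkhoffSum_succ']; linarith⟩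
    · intro h C
      obtain ⟨n, hn⟩ := h (max (C + g x) 0)
      cases n with
      | zero => exact absurd hn (by simp)
      | succ m =>
        rw [birkhoffSum_succ'] at hn
        exact ⟨m, by linarith [le_max_left (C + g x) 0]⟩
  rcases hT.measure_self_or_compl_eq_zero hB hB_inv with hB0 | hBc0
  · filter_upwards [measure_eq_zero_iff_ae_notMem.1 hB0] with x hx
    simp only [B, Set.mem_ofPred_eq, not_forall, not_exists, not_lt] at hx
    obtain ⟨C, hC⟩ := hx
    filter_upwards [eventually_ge_atTop ⌈C / (α - β)⌉₊] with n hn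
    have hCn : C ≤ (α - β) * n :=
      (div_le_iff₀' (sub_pos.2 hβα)).1 ((Nat.le_ceil _).trans (Nat.cast_le.2 hn))
    have := hC n
    rw [birkhoffSum_sub_const] at this
    linarith
  · have hB_sub : B ⊆ {x | ∃ n, 0 < birkhoffSum T g n x} := fun x hx => hx 0
    have := hT.toMeasurePreserving.setIntegral_exists_birkhoffSum_pos_nonneg hgm hg
    rw [setIntegral_congr_set (ae_eq_univ.2 (measure_mono_null (Set.compl_subset_compl.2 hB_sub)
      hBc0)), setIntegral_univ] at this
    linarith

theorem tendsto_div_of_eventually_le_of_eventually_neg_le {s : ℕ → ℝ} {c : ℝ}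
    (hs : ∀ q : ℚ, c < q → ∀ᶠ n in atTop, s n ≤ q * n)
    (hs_neg : ∀ q : ℚ, -c < q → ∀ᶠ n in atTop, -s n ≤ q * n) :
    Tendsto (fun n => s n / n) atTop (𝓝 c) := by
  refine tendsto_order.2 ⟨fun a ha => ?_, fun a ha => ?_⟩
  · obtain ⟨q, hcq, hqa⟩ := exists_rat_btwn (neg_lt_neg ha)
    filter_upwards [hs_neg q hcq, eventually_gt_atTop 0] with n hn hn0
    rw [lt_div_iff₀ (Nat.cast_pos.2 hn0)]
    nlinarith [(Nat.cast_pos (α := ℝ)).2 hn0]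
  · obtain ⟨q, hcq, hqa⟩ := exists_rat_btwn ha
    filter_upwards [hs q hcq, eventually_gt_atTop 0] with n hn hn0
    rw [div_lt_iff₀ (Nat.cast_pos.2 hn0)]
    nlinarith [(Nat.cast_pos (α := ℝ)).2 hn0]

theorem Ergodic.ae_forall_rat_eventually_birkhoffSum_le (hT : Ergodic T μ) (hfm : Measurable f)
    (hf : Integrable f μ) :
    ∀ᵐ x ∂μ, ∀ q : ℚ, ∫ x, f x ∂μ < q → ∀ᶠ n in atTop, birkhoffSum T f n x ≤ q * n := by
  refine ae_all_iff.2 fun q => ?_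
  by_cases hq : ∫ x, f x ∂μ < q
  · filter_upwards [hT.ae_eventually_birkhoffSum_le hfm hf hq] with x hx using fun _ => hx
  · exact .of_forall fun x h => absurd h hq

theorem Ergodic.ae_tendsto_birkhoffSum_div_of_measurable (hT : Ergodic T μ) (hfm : Measurable f)
    (hf : Integrable f μ) :
    ∀ᵐ x ∂μ, Tendsto (fun n => birkhoffSum T f n x / n) atTop (𝓝 (∫ x, f x ∂μ)) := by
  have h_neg := hT.ae_forall_rat_eventually_birkhoffSum_le hfm.neg hf.neg
  rw [integral_neg'] at h_neg
  filter_upwards [hT.ae_forall_rat_eventually_birkhoffSum_le hfm hf, h_neg] with x hx hx_neg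
  refine tendsto_div_of_eventually_le_of_eventually_neg_le hx fun q hq => ?_
  simpa only [birkhoffSum_neg] using hx_neg q hq

theorem Ergodic.ae_tendsto_birkhoffSum_div (hT : Ergodic T μ) (hf : Integrable f μ) :
    ∀ᵐ x ∂μ, Tendsto (fun n => birkhoffSum T f n x / n) atTop (𝓝 (∫ x, f x ∂μ)) := by
  have hfg : f =ᵐ[μ] hf.1.mk f := hf.1.ae_eq_mk
  have hS : ∀ᵐ x ∂μ, ∀ n, birkhoffSum T f n x = birkhoffSum T (hf.1.mk f) n x :=
    ae_all_iff.2 fun n => hT.quasiMeasurePreserving.birkhoffSum_ae_eq_of_ae_eq hfg n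
  filter_upwards [hS, hT.ae_tendsto_birkhoffSum_div_of_measurable
    hf.1.stronglyMeasurable_mk.measurable (hf.congr hfg)] with x hx hlim
  simpa only [hx, integral_congr_ae hfg] using hlim

end Birkhoff

theorem tendsto_comp_sub_div_of_tendsto_div {u : ℕ → ℝ} {c : ℝ}
    (h : Tendsto (fun n => u n / n) atTop (𝓝 c)) (k : ℕ) :
    Tendsto (fun n => u (n - k) / n) atTop (𝓝 c) := by
  rw [← tendsto_add_atTop_iff_nat k]
  simp only [Nat.add_sub_cancel, Nat.cast_add]
  have := h.mul (tendsto_natCast_div_add_atTop (k : ℝ))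
  rw [mul_one] at this
  refine this.congr' ?_
  filter_upwards [eventually_ne_atTop 0] with n hn
  field_simp

section Orbit

variable {X : Type*} {T : X → X} {x : X}

theorem abs_birkhoffSum_le_birkhoffSum_abs (g : X → ℝ) {m n : ℕ} (hmn : m ≤ n) :
    |birkhoffSum T g m x| ≤ birkhoffSum T (fun y => |g y|) n x :=
  (abs_sum_le_sum_abs _ _).trans <|
    sum_le_sum_of_subset_of_nonneg (range_subset_range.2 hmn) fun _ _ _ => abs_nonneg _

theorem tendsto_sum_birkhoffSum_div_of_summable {φ : ℕ → X → ℝ} {I c : ℕ → ℝ}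
    (hφ : ∀ k, Tendsto (fun n => birkhoffSum T (φ k) n x / n) atTop (𝓝 (I k)))
    (hφ_abs : ∀ k, Tendsto (fun n => birkhoffSum T (fun y => |φ k y|) n x / n) atTop (𝓝 (c k)))
    (hc : Summable c) (h_orbit : ∀ j, Summable fun k => |φ k (T^[j] x)|)
    (hΨ : Tendsto (fun n => birkhoffSum T (fun y => ∑' k, |φ k y|) n x / n) atTop
      (𝓝 (∑' k, c k))) :
    Tendsto (fun n : ℕ => (1 / (n : ℝ)) * ∑ k ∈ range (n - 1), birkhoffSum T (φ k) (n - 1 - k) x)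
      atTop (𝓝 (∑' k, I k)) := by
  have h_tsum : ∀ n : ℕ, (1 / (n : ℝ)) * ∑ k ∈ range (n - 1), birkhoffSum T (φ k) (n - 1 - k) x
      = ∑' k, birkhoffSum T (φ k) (n - 1 - k) x / n := by
    intro n
    rw [tsum_eq_sum (s := range (n - 1)) fun k hk => ?_, mul_sum]
    · simp only [one_div_mul_eq_div]
    · simp [Nat.sub_eq_zero_of_le (not_lt.1 (mem_range.not.1 hk))]
  refine (tendsto_tsum_of_dominated_convergence_of_tendsto_tsum_bound
    (bound := fun n k => birkhoffSum T (fun y => |φ k y|) n x / n)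
    (fun k => by simpa only [Nat.sub_sub] using tendsto_comp_sub_div_of_tendsto_div (hφ k) (1 + k))
    hφ_abs (fun n => (summable_sum fun j _ => h_orbit j).div_const _) hc (hΨ.congr fun n => ?_)
    fun n k => ?_).congr fun n => (h_tsum n).symm
  · rw [tsum_div_const]
    congr 1
    exact (Summable.tsum_finsetSum fun j _ => h_orbit j).symm
  · rw [Real.norm_eq_abs, abs_div, Nat.abs_cast]
    exact div_le_div_of_nonneg_right (abs_birkhoffSum_le_birkhoffSum_abs _ (by omega))
      (Nat.cast_nonneg n)

end Orbit

/-- Here `φ k` stands for the paper's `φ_{k+1}`, so `k` runs over all of `ℕ`. -/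
theorem stmt16 {X : Type*} [MeasurableSpace X] (μ : Measure X) [IsProbabilityMeasure μ]
    (T : X → X) (hT : Ergodic T μ)
    (φ : ℕ → X → ℝ)
    (hint : ∀ k, Integrable (φ k) μ)
    (hsum : Summable fun k => ∫ x, |φ k x| ∂μ) :
    ∀ᵐ x ∂μ, Tendsto (fun n : ℕ =>
        (1 / (n : ℝ)) * ∑ k ∈ Finset.range (n - 1),
          ∑ j ∈ Finset.range (n - 1 - k), φ k (T^[j] x))
      atTop (nhds (∑' k : ℕ, ∫ x, φ k x ∂μ)) := by
  have hφ_abs : ∀ k, Integrable (fun x => |φ k x|) μ := fun k => (hint k).abs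
  have hsum_abs : Summable fun k => ∫ x, ‖|φ k x|‖ ∂μ := by
    simpa only [Real.norm_eq_abs, abs_abs] using hsum
  have hΨ := integrable_tsum_of_summable_integral_norm hφ_abs hsum_abs
  have h_orbit : ∀ᵐ x ∂μ, ∀ j, Summable fun k => |φ k (T^[j] x)| := ae_all_iff.2 fun j =>
    (hT.toMeasurePreserving.iterate j).quasiMeasurePreserving.ae
      (ae_summable_of_summable_integral_norm hφ_abs hsum_abs)
  filter_upwards [ae_all_iff.2 fun k => hT.ae_tendsto_birkhoffSum_div (hint k),
    ae_all_iff.2 fun k => hT.ae_tendsto_birkhoffSum_div (hφ_abs k),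
    hT.ae_tendsto_birkhoffSum_div hΨ, h_orbit] with x hφx h_absx hΨx h_orbitx
  rw [← integral_tsum_of_summable_integral_norm hφ_abs hsum_abs] at hΨx
  exact tendsto_sum_birkhoffSum_div_of_summable hφx h_absx hsum h_orbitx hΨx
end

section
/- Let (X, μ, T) be a probability measure-preserving system with f : X → Z^d such that the cocycle (T, f) is recurrent and the cylinder map T̃_f(x, l) = (Tx, l + f(x)) is ergodic on X × Z^d with the product of μ and counting measure. Let (Ω, P, (θ^l)_{l ∈ Z^d}) be an ergodic measure-preserving Z^d-action. Then the skew product T_{θ,f}(x, ω) = (Tx, θ^{f(x)} ω) is ergodic on (X × Ω, μ × P). -/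
open Finset MeasureTheory Filter

/-!
Let `s ⊆ X × Ω` be invariant under `T_{θ,f}`. For fixed `ω`, the set
`{(x, l) | (x, θ^l ω) ∈ s}` is invariant under the cylinder map, so by its ergodicity either all of
its slices are null or all are conull. Hence each slice `s_ω` has measure `0` or `1`, the set of
`ω` with `μ s_ω = 1` is `θ`-invariant, so has `P`-measure `0` or `1`, and by Fubini so has `s`.
-/

section CountableFibre

variable {X L : Type*} [MeasurableSpace X] [MeasurableSpace L] [MeasurableSingletonClass L]
  [Countable L] {μ : Measure X} [SFinite μ]

theorem prod_count_apply_eq_zero_iff {s : Set (X × L)} (hs : MeasurableSet s) :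
    μ.prod (Measure.count : Measure L) s = 0 ↔ ∀ l, μ {x | (x, l) ∈ s} = 0 := by
  rw [Measure.prod_apply_symm hs, lintegral_count, ENNReal.tsum_eq_zero]
  rfl

theorem Ergodic.slices_null_or_conull {g : X × L → X × L}
    (hg : Ergodic g (μ.prod Measure.count)) {s : Set (X × L)} (hs : MeasurableSet s)
    (hgs : g ⁻¹' s = s) :
    (∀ l, μ {x | (x, l) ∈ s} = 0) ∨ (∀ l, μ {x | (x, l) ∈ s}ᶜ = 0) :=
  (hg.measure_self_or_compl_eq_zero hs hgs).imp (prod_count_apply_eq_zero_iff hs).1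
    (prod_count_apply_eq_zero_iff hs.compl).1

theorem measurePreserving_skewProduct_of_countable {Ω : Type*} [MeasurableSpace Ω]
    {P : Measure Ω} [SFinite P] {T : X → X} (hT : MeasurePreserving T μ μ) {f : X → L}
    (hf : Measurable f) {θ : L → Ω → Ω} (hθ : ∀ l, MeasurePreserving (θ l) P P) :
    MeasurePreserving (fun p : X × Ω => (T p.1, θ (f p.1) p.2)) (μ.prod P) (μ.prod P) := by
  have hθm : Measurable fun q : Ω × L => θ q.2 q.1 :=
    measurable_from_prod_countable_left fun l => (hθ l).measurable
  exact hT.skew_product (g := fun x => θ (f x))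
    (hθm.comp (measurable_snd.prodMk (hf.comp measurable_fst)))
    (.of_forall fun x => (hθ (f x)).map_eq)

end CountableFibre

theorem prod_apply_eq_of_slices_zero_or_one {X Ω : Type*} [MeasurableSpace X]
    [MeasurableSpace Ω] {μ : Measure X} {P : Measure Ω} [SFinite μ] [SFinite P]
    {s : Set (X × Ω)} (hs : MeasurableSet s)
    (h01 : ∀ ω, μ {x | (x, ω) ∈ s} = 0 ∨ μ {x | (x, ω) ∈ s} = 1) :
    μ.prod P s = P {ω | μ {x | (x, ω) ∈ s} = 1} := by
  have hE : MeasurableSet {ω | μ {x | (x, ω) ∈ s} = 1} :=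
    measurable_measure_prodMk_right hs (measurableSet_singleton 1)
  have hslice : (fun ω => μ {x | (x, ω) ∈ s}) = {ω | μ {x | (x, ω) ∈ s} = 1}.indicator 1 := by
    ext ω
    rcases h01 ω with h | h <;> simp [h]
  rw [Measure.prod_apply_symm hs, ← lintegral_indicator_one hE]
  exact congrArg (lintegral P) hslice

theorem preimage_cylinder_setOf_action {X Ω L : Type*} [AddCommMonoid L] {T : X → X}
    {f : X → L} {θ : L → Ω → Ω} (hθadd : ∀ l l', θ (l + l') = θ l ∘ θ l')
    {s : Set (X × Ω)} (hs : (fun p : X × Ω => (T p.1, θ (f p.1) p.2)) ⁻¹' s = s) (ω : Ω) :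
    (fun p : X × L => (T p.1, p.2 + f p.1)) ⁻¹' {p | (p.1, θ p.2 ω) ∈ s} =
      {p | (p.1, θ p.2 ω) ∈ s} := by
  ext p
  have hθ : θ (p.2 + f p.1) ω = θ (f p.1) (θ p.2 ω) := by rw [add_comm, hθadd]; rfl
  simp only [Set.mem_preimage, Set.mem_ofPred_eq, hθ]
  exact Set.ext_iff.1 hs (p.1, θ p.2 ω)

section SkewProduct

variable {X Ω L : Type*} [MeasurableSpace X] [MeasurableSpace Ω] [MeasurableSpace L]
  [MeasurableSingletonClass L] [Countable L] [AddCommMonoid L]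
  {μ : Measure X} [IsProbabilityMeasure μ] {T : X → X} {f : X → L} {θ : L → Ω → Ω}

theorem slices_along_orbit_zero_or_one
    (hcyl : Ergodic (fun p : X × L => (T p.1, p.2 + f p.1)) (μ.prod Measure.count))
    (hθadd : ∀ l l', θ (l + l') = θ l ∘ θ l') {s : Set (X × Ω)} (hs : MeasurableSet s)
    (hsinv : (fun p : X × Ω => (T p.1, θ (f p.1) p.2)) ⁻¹' s = s) (ω : Ω) :
    (∀ l, μ {x | (x, θ l ω) ∈ s} = 0) ∨ (∀ l, μ {x | (x, θ l ω) ∈ s} = 1) := by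
  have hA : MeasurableSet {p : X × L | (p.1, θ p.2 ω) ∈ s} :=
    hs.preimage <|
      measurable_fst.prodMk ((measurable_of_countable fun l => θ l ω).comp measurable_snd)
  refine (hcyl.slices_null_or_conull hA (preimage_cylinder_setOf_action hθadd hsinv ω)).imp
    id fun h l => ?_
  exact (prob_compl_eq_zero_iff (hs.preimage (measurable_id.prodMk measurable_const))).1 (h l)

end SkewProduct

theorem stmt19_general {X : Type*} [MeasurableSpace X] (μ : Measure X) [IsProbabilityMeasure μ]
    (T : X → X) (hT : MeasurePreserving T μ μ)
    (d : ℕ) (f : X → (Fin d → ℤ)) (hf : Measurable f)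
    (hcyl : Ergodic (fun p : X × (Fin d → ℤ) => (T p.1, p.2 + f p.1))
      (μ.prod (Measure.count : Measure (Fin d → ℤ))))
    {Ω : Type*} [MeasurableSpace Ω] (P : Measure Ω) [IsProbabilityMeasure P]
    (θ : (Fin d → ℤ) → Ω → Ω)
    (hθmp : ∀ l, MeasurePreserving (θ l) P P)
    (hθ0 : θ 0 = id)
    (hθadd : ∀ l l', θ (l + l') = θ l ∘ θ l')
    (hθerg : ∀ s : Set Ω, MeasurableSet s → (∀ l, θ l ⁻¹' s = s) →
      P s = 0 ∨ P s = 1) :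
    Ergodic (fun p : X × Ω => (T p.1, θ (f p.1) p.2)) (μ.prod P) := by
  refine ⟨measurePreserving_skewProduct_of_countable hT hf hθmp, ⟨fun s hs hsinv => ?_⟩⟩
  have horbit := slices_along_orbit_zero_or_one hcyl hθadd hs hsinv
  have h01 (ω : Ω) : μ {x | (x, ω) ∈ s} = 0 ∨ μ {x | (x, ω) ∈ s} = 1 := by
    simpa [hθ0] using (horbit ω).imp (· 0) (· 0)
  set E := {ω | μ {x | (x, ω) ∈ s} = 1}
  have hEm : MeasurableSet E := measurable_measure_prodMk_right hs (measurableSet_singleton 1)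
  have hEinv (l) : θ l ⁻¹' E = E := by
    ext ω
    rcases horbit ω with h | h <;> have h0 := h 0 <;> simp only [hθ0, id] at h0 <;>
      simp [E, h l, h0]
  rw [eventuallyConst_set', ae_eq_empty, ae_eq_univ, prob_compl_eq_zero_iff hs,
    prod_apply_eq_of_slices_zero_or_one hs h01]
  exact hθerg E hEm hEinv

/-- If the cocycle `(T, f)` is recurrent and the cylinder map
`T̃_f(x, l) = (Tx, l + f(x))` is ergodic for `μ × counting`, then for any ergodic
measure-preserving `ℤ^d`-action `θ` on `(Ω, P)`, the skew product
`T_{θ,f}(x, ω) = (Tx, θ^{f(x)} ω)` is ergodic for `μ × P`. -/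
theorem stmt19 {X : Type*} [MeasurableSpace X] (μ : Measure X) [IsProbabilityMeasure μ]
    (T : X → X) (hT : MeasurePreserving T μ μ)
    (d : ℕ) (f : X → (Fin d → ℤ)) (hf : Measurable f)
    (hrec : ∀ᵐ x ∂μ, {k : ℕ | 1 ≤ k ∧ ergSum d T f k x = 0}.Infinite)
    (hcyl : Ergodic (fun p : X × (Fin d → ℤ) => (T p.1, p.2 + f p.1))
      (μ.prod (Measure.count : Measure (Fin d → ℤ))))
    {Ω : Type*} [MeasurableSpace Ω] (P : Measure Ω) [IsProbabilityMeasure P]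
    (θ : (Fin d → ℤ) → Ω → Ω)
    (hθmp : ∀ l, MeasurePreserving (θ l) P P)
    (hθ0 : θ 0 = id)
    (hθadd : ∀ l l', θ (l + l') = θ l ∘ θ l')
    (hθerg : ∀ s : Set Ω, MeasurableSet s → (∀ l, θ l ⁻¹' s = s) →
      P s = 0 ∨ P s = 1) :
    Ergodic (fun p : X × Ω => (T p.1, θ (f p.1) p.2)) (μ.prod P) :=
  stmt19_general μ T hT d f hf hcyl P θ hθmp hθ0 hθadd hθerg
end
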